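/- arXiv:2106.06127 — 10 statements merged into one kernel-verified Lean document; each statement's English description precedes it below -/
import Mathlib

section
/- Let (Ω, 𝓕, μ) be a probability space, let n ∈ ℕ, and let ε̄ ≥ 0. Suppose that for every ℓ ∈ ℕ there are measurable maps φ_ℓ, ψ_ℓ : Ω → ℝⁿ such that for every Borel set S ⊆ ℝⁿ one has e^{−ε̄}·μ(ψ_ℓ⁻¹(S)) ≤ μ(φ_ℓ⁻¹(S)) ≤ e^{ε̄}·μ(ψ_ℓ⁻¹(S)). If φ, ψ : Ω → ℝⁿ are measurable maps such that φ_ℓ(ω) → φ(ω) and ψ_ℓ(ω) → ψ(ω) as ℓ → ∞ for every ω ∈ Ω, then for every Borel set S ⊆ ℝⁿ one has e^{−ε̄}·μ(ψ⁻¹(S)) ≤ μ(φ⁻¹(S)) ≤ e^{ε̄}·μ(ψ⁻¹(S)). -/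
open MeasureTheory Filter Metric Set

section aux

variable {Ω : Type*} [MeasurableSpace Ω] {μ : Measure Ω} {n : ℕ}

private lemma open_liminf
    (μ : Measure Ω) (f : ℕ → Ω → EuclideanSpace ℝ (Fin n))
    (F : Ω → EuclideanSpace ℝ (Fin n))
    (hFc : ∀ ω, Tendsto (fun ℓ => f ℓ ω) atTop (nhds (F ω)))
    {U : Set (EuclideanSpace ℝ (Fin n))} (hU : IsOpen U) :
    μ (F ⁻¹' U) ≤ liminf (fun ℓ => μ (f ℓ ⁻¹' U)) atTop := by
  set A : ℕ → Set Ω := fun N => ⋂ k, ⋂ (_ : N ≤ k), f k ⁻¹' U with hA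
  have hmono : Monotone A := fun a b hab =>
    iInter₂_mono' fun k hk => ⟨k, le_trans hab hk, le_rfl⟩
  have hsub : F ⁻¹' U ⊆ ⋃ N, A N := by
    intro ω hω
    obtain ⟨N, hN⟩ := eventually_atTop.mp ((hFc ω).eventually (hU.mem_nhds hω))
    exact mem_iUnion.2 ⟨N, mem_iInter₂.2 hN⟩
  calc μ (F ⁻¹' U) ≤ μ (⋃ N, A N) := measure_mono hsub
    _ = ⨆ N, μ (A N) := hmono.measure_iUnion
    _ ≤ ⨆ N, ⨅ k, ⨅ (_ : k ≥ N), μ (f k ⁻¹' U) :=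
        iSup_mono fun N => le_iInf₂ fun k hk => measure_mono (iInter₂_subset k hk)
    _ = liminf (fun ℓ => μ (f ℓ ⁻¹' U)) atTop := liminf_eq_iSup_iInf_of_nat.symm

private lemma limsup_closure
    (μ : Measure Ω) [IsProbabilityMeasure μ] (g : ℕ → Ω → EuclideanSpace ℝ (Fin n))
    (hg : ∀ ℓ, Measurable (g ℓ))
    (G : Ω → EuclideanSpace ℝ (Fin n))
    (hGc : ∀ ω, Tendsto (fun ℓ => g ℓ ω) atTop (nhds (G ω)))
    {A : Set (EuclideanSpace ℝ (Fin n))} (hA : MeasurableSet A) :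
    limsup (fun ℓ => μ (g ℓ ⁻¹' A)) atTop ≤ μ (G ⁻¹' closure A) := by
  set B : ℕ → Set Ω := fun N => ⋃ k, ⋃ (_ : N ≤ k), g k ⁻¹' A with hB
  have hanti : Antitone B := fun a b hab =>
    iUnion₂_mono' fun k hk => ⟨k, le_trans hab hk, le_rfl⟩
  have hmeas : ∀ N, NullMeasurableSet (B N) μ := fun N =>
    (MeasurableSet.iUnion fun k => MeasurableSet.iUnion fun _ =>
      (hg k) hA).nullMeasurableSet
  have hsub : ⋂ N, B N ⊆ G ⁻¹' closure A := by
    intro ω hω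
    have hfreq : ∃ᶠ k in atTop, g k ω ∈ A := by
      rw [frequently_atTop]
      intro N
      obtain ⟨k, hk1, hk2⟩ := mem_iUnion₂.mp (mem_iInter.mp hω N)
      exact ⟨k, hk1, hk2⟩
    exact mem_closure_of_frequently_of_tendsto hfreq (hGc ω)
  calc limsup (fun ℓ => μ (g ℓ ⁻¹' A)) atTop
      = ⨅ N, ⨆ k, ⨆ (_ : k ≥ N), μ (g k ⁻¹' A) := limsup_eq_iInf_iSup_of_nat
    _ ≤ ⨅ N, μ (B N) :=
        iInf_mono fun N => iSup₂_le fun k hk => measure_mono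
          (subset_iUnion₂ (s := fun k (_ : N ≤ k) => g k ⁻¹' A) k hk)
    _ = μ (⋂ N, B N) := (hanti.measure_iInter hmeas ⟨0, measure_ne_top μ _⟩).symm
    _ ≤ μ (G ⁻¹' closure A) := measure_mono hsub

private lemma key_le
    (μ : Measure Ω) [IsProbabilityMeasure μ] {c : ENNReal} (hc : c ≠ ⊤)
    (f g : ℕ → Ω → EuclideanSpace ℝ (Fin n))
    (hf : ∀ ℓ, Measurable (f ℓ)) (hg : ∀ ℓ, Measurable (g ℓ))
    (h : ∀ (ℓ : ℕ) (S : Set (EuclideanSpace ℝ (Fin n))), MeasurableSet S →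
      μ (f ℓ ⁻¹' S) ≤ c * μ (g ℓ ⁻¹' S))
    (F G : Ω → EuclideanSpace ℝ (Fin n)) (hF : Measurable F) (hG : Measurable G)
    (hFc : ∀ ω, Tendsto (fun ℓ => f ℓ ω) atTop (nhds (F ω)))
    (hGc : ∀ ω, Tendsto (fun ℓ => g ℓ ω) atTop (nhds (G ω)))
    {S : Set (EuclideanSpace ℝ (Fin n))} (hS : MeasurableSet S) :
    μ (F ⁻¹' S) ≤ c * μ (G ⁻¹' S) := by
  -- Step 1: the inequality for closed sets.
  have hclosed : ∀ K : Set (EuclideanSpace ℝ (Fin n)), IsClosed K →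
      μ (F ⁻¹' K) ≤ c * μ (G ⁻¹' K) := by
    intro K hK
    haveI : IsProbabilityMeasure (μ.map G) := Measure.isProbabilityMeasure_map hG.aemeasurable
    have hth : ∀ η : ℝ, 0 < η →
        μ (F ⁻¹' K) ≤ c * (μ.map G) (cthickening η K) := by
      intro η hη
      have step : μ (F ⁻¹' K) ≤ c * μ (G ⁻¹' closure (thickening η K)) := by
        calc μ (F ⁻¹' K) ≤ μ (F ⁻¹' thickening η K) :=
              measure_mono (Set.preimage_mono (self_subset_thickening hη K))
          _ ≤ liminf (fun ℓ => μ (f ℓ ⁻¹' thickening η K)) atTop :=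
              open_liminf μ f F hFc isOpen_thickening
          _ ≤ liminf (fun ℓ => c * μ (g ℓ ⁻¹' thickening η K)) atTop :=
              liminf_le_liminf (Eventually.of_forall fun ℓ =>
                h ℓ _ isOpen_thickening.measurableSet)
          _ ≤ limsup (fun ℓ => c * μ (g ℓ ⁻¹' thickening η K)) atTop :=
              liminf_le_limsup
          _ = c * limsup (fun ℓ => μ (g ℓ ⁻¹' thickening η K)) atTop :=
              ENNReal.limsup_const_mul_of_ne_top hc
          _ ≤ c * μ (G ⁻¹' closure (thickening η K)) :=
              mul_le_mul_right (limsup_closure μ g hg G hGc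
                isOpen_thickening.measurableSet) c
      calc μ (F ⁻¹' K) ≤ c * μ (G ⁻¹' closure (thickening η K)) := step
        _ ≤ c * μ (G ⁻¹' cthickening η K) :=
            mul_le_mul_right (measure_mono (Set.preimage_mono
              (closure_thickening_subset_cthickening η K))) c
        _ = c * (μ.map G) (cthickening η K) := by
            rw [Measure.map_apply hG isClosed_cthickening.measurableSet]
    have htend : Tendsto (fun η => c * (μ.map G) (cthickening η K))
        (nhdsWithin 0 (Set.Ioi (0:ℝ))) (nhds (c * (μ.map G) K)) := by
      refine ENNReal.Tendsto.const_mul ?_ (Or.inr hc)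
      exact (tendsto_measure_cthickening_of_isClosed
        ⟨1, one_pos, measure_ne_top _ _⟩ hK).mono_left nhdsWithin_le_nhds
    have := ge_of_tendsto htend (by
      filter_upwards [self_mem_nhdsWithin] with η hη
      exact hth η hη)
    rwa [Measure.map_apply hG hK.measurableSet] at this
  -- Step 2: extend to all Borel sets by inner regularity w.r.t. closed sets.
  haveI : IsProbabilityMeasure (μ.map F) := Measure.isProbabilityMeasure_map hF.aemeasurable
  have hreg := hS.measure_eq_iSup_isClosed_of_ne_top (μ := μ.map F)
    (measure_ne_top _ _)
  rw [← Measure.map_apply hF hS, hreg]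
  refine iSup₂_le fun K hKS => iSup_le fun hK => ?_
  rw [Measure.map_apply hF hK.measurableSet]
  calc μ (F ⁻¹' K) ≤ c * μ (G ⁻¹' K) := hclosed K hK
    _ ≤ c * μ (G ⁻¹' S) := mul_le_mul_right (measure_mono (Set.preimage_mono hKS)) c

end aux

/-- Lemma 3.1: pointwise limits of `ε̄`-differentially-private randomized algorithms
remain `ε̄`-differentially private. -/
theorem pointwise_limit_of_DP
    {Ω : Type*} [MeasurableSpace Ω] (μ : Measure Ω) [IsProbabilityMeasure μ]
    (n : ℕ) (ε : ℝ) (hε : 0 ≤ ε)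
    (φseq ψseq : ℕ → Ω → EuclideanSpace ℝ (Fin n))
    (hφseq : ∀ ℓ, Measurable (φseq ℓ)) (hψseq : ∀ ℓ, Measurable (ψseq ℓ))
    (hDP : ∀ (ℓ : ℕ) (S : Set (EuclideanSpace ℝ (Fin n))), MeasurableSet S →
      ENNReal.ofReal (Real.exp (-ε)) * μ ((ψseq ℓ) ⁻¹' S) ≤ μ ((φseq ℓ) ⁻¹' S) ∧
        μ ((φseq ℓ) ⁻¹' S) ≤ ENNReal.ofReal (Real.exp ε) * μ ((ψseq ℓ) ⁻¹' S))
    (φ ψ : Ω → EuclideanSpace ℝ (Fin n)) (hφ : Measurable φ) (hψ : Measurable ψ)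
    (hφconv : ∀ ω, Tendsto (fun ℓ => φseq ℓ ω) atTop (nhds (φ ω)))
    (hψconv : ∀ ω, Tendsto (fun ℓ => ψseq ℓ ω) atTop (nhds (ψ ω)))
    (S : Set (EuclideanSpace ℝ (Fin n))) (hS : MeasurableSet S) :
    ENNReal.ofReal (Real.exp (-ε)) * μ (ψ ⁻¹' S) ≤ μ (φ ⁻¹' S) ∧
      μ (φ ⁻¹' S) ≤ ENNReal.ofReal (Real.exp ε) * μ (ψ ⁻¹' S) := by
  set cm : ENNReal := ENNReal.ofReal (Real.exp (-ε)) with hcm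
  set cp : ENNReal := ENNReal.ofReal (Real.exp ε) with hcp
  have hcp_ne : cp ≠ ⊤ := ENNReal.ofReal_ne_top
  have hmul : cm * cp = 1 := by
    rw [hcm, hcp, ← ENNReal.ofReal_mul (Real.exp_pos _).le, ← Real.exp_add,
      neg_add_cancel, Real.exp_zero, ENNReal.ofReal_one]
  have hmul' : cp * cm = 1 := by rwa [mul_comm] at hmul
  constructor
  · -- first inequality, via `key_le` with the roles of `φ` and `ψ` swapped
    have h2 : μ (ψ ⁻¹' S) ≤ cp * μ (φ ⁻¹' S) := by
      refine key_le μ hcp_ne ψseq φseq hψseq hφseq ?_ ψ φ hψ hφ hψconv hφconv hS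
      intro ℓ T hT
      have h1 := (hDP ℓ T hT).1
      calc μ (ψseq ℓ ⁻¹' T) = cp * (cm * μ (ψseq ℓ ⁻¹' T)) := by
            rw [← mul_assoc, hmul', one_mul]
        _ ≤ cp * μ (φseq ℓ ⁻¹' T) := mul_le_mul_right h1 cp
    calc cm * μ (ψ ⁻¹' S) ≤ cm * (cp * μ (φ ⁻¹' S)) := mul_le_mul_right h2 cm
      _ = μ (φ ⁻¹' S) := by rw [← mul_assoc, hmul, one_mul]
  · exact key_le μ hcp_ne φseq ψseq hφseq hψseq
      (fun ℓ T hT => (hDP ℓ T hT).2) φ ψ hφ hψ hφconv hψconv hS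
end

section
/- Let n, M ∈ ℕ, let h_1, …, h_M : ℝⁿ → ℝ be convex continuous functions, and let W := {z ∈ ℝⁿ : h_m(z) ≤ 0 for all m ∈ [M]} be nonempty. Let G : ℝⁿ → ℝ be continuous and ρ-strongly convex for some ρ > 0, let ẑ be the unique minimizer of G over W, and for each ℓ > 0 let ẑ_ℓ be the unique minimizer over ℝⁿ of z ↦ G(z) + g(z; ℓ), where g(z; ℓ) := Σ_{m=1}^M ln(1 + e^{ℓ·h_m(z)}). Assume the Slater-density condition: for every δ > 0 there exists z̃ ∈ ℝⁿ with ‖z̃ − ẑ‖ < δ and h_m(z̃) < 0 for all m ∈ [M]. Then ẑ_ℓ → ẑ as ℓ → ∞. -/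
/-!
Every cluster point `p` of the penalized minimizers is feasible, because the penalty dominates
`ℓ * h m` and stays bounded along the minimizers; and `G p ≤ G z` for every strictly feasible `z`,
because the penalty at `z` vanishes as `ℓ → ∞`. Slater density then gives `G p ≤ G ẑ`, so `p` is
a constrained minimizer and equals `ẑ`. Strong convexity makes the sublevel sets of `G` bounded,
which keeps the minimizers in a compact set, so a unique cluster point is a limit.
-/

open Filter Set Topology Real

namespace Real

lemma log_one_add_exp_nonneg (t : ℝ) : 0 ≤ log (1 + exp t) :=
  log_nonneg (by linarith [exp_pos t])

lemma le_log_one_add_exp (t : ℝ) : t ≤ log (1 + exp t) :=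
  (le_log_iff_exp_le (by positivity)).2 (by linarith [exp_pos t])

lemma tendsto_log_one_add_exp_mul_atTop {c : ℝ} (hc : c < 0) :
    Tendsto (fun ℓ => log (1 + exp (ℓ * c))) atTop (𝓝 0) := by
  have hexp : Tendsto (fun ℓ => 1 + exp (ℓ * c)) atTop (𝓝 1) := by
    simpa using (tendsto_exp_atBot.comp (tendsto_id.atTop_mul_const_of_neg hc)).const_add 1
  simpa [Function.comp_def] using (continuousAt_log one_ne_zero).tendsto.comp hexp

end Real

lemma StrongConvexOn.isBounded_sublevel {E : Type*} [NormedAddCommGroup E] [NormedSpace ℝ E]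
    [ProperSpace E] {f : E → ℝ} {ρ : ℝ} (hf : StrongConvexOn univ ρ f) (hρ : 0 < ρ)
    (hcont : Continuous f) (c : ℝ) : Bornology.IsBounded {z | f z ≤ c} := by
  obtain ⟨b, hb⟩ := (isCompact_closedBall (0 : E) 1).bddBelow_image hcont.continuousOn
  have hb0 : b ≤ f 0 := hb (mem_image_of_mem f (Metric.mem_closedBall_self zero_le_one))
  set c' := max c (f 0)
  refine (Metric.isBounded_closedBall (x := 0) (r := 1 + 2 * (c' - b) / ρ)).subset fun z hz => ?_
  rw [mem_closedBall_zero_iff]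
  by_contra! hd
  have hcb : 0 ≤ c' - b := by linarith [le_max_right c (f 0)]
  set d := ‖z‖
  have hd1 : 1 < d := by linarith [div_nonneg (mul_nonneg zero_le_two hcb) hρ.le]
  set t := d⁻¹
  have htd : t * d = 1 := inv_mul_cancel₀ (by linarith)
  have ht1 : t < 1 := inv_lt_one_of_one_lt₀ hd1
  -- compare with the point of the unit sphere on the segment from `0` to `z`
  have hseg := hf.2 (mem_univ 0) (mem_univ z) (sub_nonneg.2 ht1.le) (by positivity)
    (sub_add_cancel 1 t)
  have hsphere : b ≤ f (t • z) := hb (mem_image_of_mem f (by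
    rw [mem_closedBall_zero_iff, norm_smul, norm_inv, norm_norm, htd]))
  simp only [smul_zero, zero_add, zero_sub, norm_neg, smul_eq_mul] at hseg
  have hfz : f z ≤ c' := le_trans hz (le_max_left _ _)
  have hmix : (1 - t) * f 0 + t * f z ≤ c' := by
    nlinarith [le_max_right c (f 0), inv_pos.2 (zero_lt_one.trans hd1)]
  have hquad : (1 - t) * t * (ρ / 2 * d ^ 2) = ρ / 2 * (d - 1) := by
    linear_combination ρ / 2 * (d - 1 - t * d) * htd
  have : d - 1 ≤ 2 * (c' - b) / ρ := by
    rw [le_div_iff₀ hρ]; linarith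
  linarith

lemma MapClusterPt.le_of_forall_eventually_le_add {X α : Type*} [TopologicalSpace X]
    {l : Filter α} {f : α → X} {p : X} (hp : MapClusterPt p l f) {φ : X → ℝ}
    (hφ : Continuous φ) {c : ℝ} (h : ∀ ε > 0, ∀ᶠ a in l, φ (f a) ≤ c + ε) : φ p ≤ c :=
  le_of_forall_pos_le_add fun ε hε =>
    (isClosed_le hφ continuous_const).mem_of_mapClusterPt hp (h ε hε)

noncomputable def logPenalty {ι E : Type*} [Fintype ι] (h : ι → E → ℝ) (z : E) (ℓ : ℝ) : ℝ :=
  ∑ m, log (1 + exp (ℓ * h m z))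

section LogPenalty

variable {ι E : Type*} [Fintype ι] {h : ι → E → ℝ}

lemma logPenalty_nonneg (z : E) (ℓ : ℝ) : 0 ≤ logPenalty h z ℓ :=
  Finset.sum_nonneg fun _ _ => log_one_add_exp_nonneg _

lemma mul_le_logPenalty (m : ι) (z : E) (ℓ : ℝ) : ℓ * h m z ≤ logPenalty h z ℓ :=
  (le_log_one_add_exp _).trans <|
    Finset.single_le_sum (f := fun m => log (1 + exp (ℓ * h m z)))
      (fun _ _ => log_one_add_exp_nonneg _) (Finset.mem_univ m)

lemma tendsto_logPenalty_atTop {z : E} (hz : ∀ m, h m z < 0) :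
    Tendsto (logPenalty h z) atTop (𝓝 0) := by
  have := tendsto_finsetSum Finset.univ fun m _ => tendsto_log_one_add_exp_mul_atTop (hz m)
  rwa [Finset.sum_const_zero] at this

variable {G : E → ℝ} {x : ℝ → E}

lemma eventually_penalized_value_le
    (hx : ∀ ℓ, 0 < ℓ → IsMinOn (fun z => G z + logPenalty h z ℓ) univ (x ℓ))
    {z : E} (hz : ∀ m, h m z < 0) {ε : ℝ} (hε : 0 < ε) :
    ∀ᶠ ℓ in atTop, G (x ℓ) + logPenalty h (x ℓ) ℓ ≤ G z + ε := by
  filter_upwards [(tendsto_logPenalty_atTop hz).eventually (gt_mem_nhds hε),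
    eventually_gt_atTop 0] with ℓ hpen hℓ
  have hmin : G (x ℓ) + logPenalty h (x ℓ) ℓ ≤ G z + logPenalty h z ℓ := hx ℓ hℓ (mem_univ z)
  linarith

variable [TopologicalSpace E] {p : E}

lemma apply_le_of_mapClusterPt_penalized_minimizers
    (hx : ∀ ℓ, 0 < ℓ → IsMinOn (fun z => G z + logPenalty h z ℓ) univ (x ℓ))
    (hG : Continuous G) (hp : MapClusterPt p atTop x) {z : E} (hz : ∀ m, h m z < 0) :
    G p ≤ G z :=
  hp.le_of_forall_eventually_le_add hG fun _ hε =>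
    (eventually_penalized_value_le hx hz hε).mono fun ℓ hℓ => by
      linarith [logPenalty_nonneg (h := h) (x ℓ) ℓ]

lemma nonpos_of_mapClusterPt_of_logPenalty_le (hh : ∀ m, Continuous (h m)) {C : ℝ}
    (hC : ∀ᶠ ℓ in atTop, logPenalty h (x ℓ) ℓ ≤ C) (hp : MapClusterPt p atTop x) (m : ι) :
    h m p ≤ 0 :=
  hp.le_of_forall_eventually_le_add (hh m) fun ε hε => by
    filter_upwards [hC, eventually_gt_atTop 0, eventually_ge_atTop (C / ε)] with ℓ hℓC hℓ hℓε
    have : C ≤ ℓ * ε := (div_le_iff₀ hε).1 hℓε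
    nlinarith [mul_le_logPenalty (h := h) m (x ℓ) ℓ]

end LogPenalty

theorem penalized_minimizers_tendsto_constrained_minimizer_general
    (n M : ℕ) (h : Fin M → EuclideanSpace ℝ (Fin n) → ℝ)
    (hcont : ∀ m, Continuous (h m))
    (W : Set (EuclideanSpace ℝ (Fin n)))
    (hWdef : W = {z | ∀ m, h m z ≤ 0})
    (G : EuclideanSpace ℝ (Fin n) → ℝ) (hGcont : Continuous G)
    (ρ : ℝ) (hρ : 0 < ρ)
    (hGstrong : ConvexOn ℝ Set.univ (fun z => G z - ρ / 2 * ‖z‖ ^ 2))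
    (zhat : EuclideanSpace ℝ (Fin n))
    (hzhatmin : IsMinOn G W zhat)
    (hzhatuniq : ∀ y ∈ W, IsMinOn G W y → y = zhat)
    (g : EuclideanSpace ℝ (Fin n) → ℝ → ℝ)
    (hg : ∀ z ℓ, g z ℓ = ∑ m, Real.log (1 + Real.exp (ℓ * h m z)))
    (zpen : ℝ → EuclideanSpace ℝ (Fin n))
    (hzpenmin : ∀ ℓ : ℝ, 0 < ℓ → IsMinOn (fun z => G z + g z ℓ) Set.univ (zpen ℓ))
    (hslater : ∀ δ : ℝ, 0 < δ → ∃ zt : EuclideanSpace ℝ (Fin n),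
      ‖zt - zhat‖ < δ ∧ ∀ m, h m zt < 0) :
    Tendsto zpen atTop (nhds zhat) := by
  obtain rfl : g = logPenalty h := funext₂ hg
  obtain ⟨z₀, -, hz₀⟩ := hslater 1 one_pos
  set K := {z | G z ≤ G z₀ + 1}
  have hK : IsCompact K := Metric.isCompact_of_isClosed_isBounded
    (isClosed_le hGcont continuous_const)
    ((strongConvexOn_iff_convex.2 hGstrong).isBounded_sublevel hρ hGcont _)
  obtain ⟨b, hb⟩ := hK.bddBelow_image hGcont.continuousOn
  have hval := eventually_penalized_value_le hzpenmin hz₀ one_pos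
  have hzpenK : ∀ᶠ ℓ in atTop, zpen ℓ ∈ K :=
    hval.mono fun ℓ hℓ => show G (zpen ℓ) ≤ G z₀ + 1 by
      linarith [logPenalty_nonneg (h := h) (zpen ℓ) ℓ]
  have hpen : ∀ᶠ ℓ in atTop, logPenalty h (zpen ℓ) ℓ ≤ G z₀ + 1 - b :=
    (hval.and hzpenK).mono fun ℓ hℓ => by linarith [hb (mem_image_of_mem G hℓ.2)]
  have hzhat : zhat ∈ closure {z | ∀ m, h m z < 0} :=
    Metric.mem_closure_iff.2 fun δ hδ => (hslater δ hδ).imp fun z hz =>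
      ⟨hz.2, by rw [dist_comm, dist_eq_norm]; exact hz.1⟩
  refine hK.tendsto_nhds_of_unique_mapClusterPt hzpenK fun p _ hp => ?_
  have hpW : p ∈ W := hWdef ▸ nonpos_of_mapClusterPt_of_logPenalty_le hcont hpen hp
  have hGp : G p ≤ G zhat :=
    closure_minimal (fun _ hz => apply_le_of_mapClusterPt_penalized_minimizers hzpenmin hGcont
      hp hz) (isClosed_le continuous_const hGcont) hzhat
  exact hzhatuniq p hpW fun y hy => hGp.trans (hzhatmin hy)

/-- Proposition 3.2: pointwise convergence of the log-penalized unconstrained minimizers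
to the constrained minimizer. -/
theorem penalized_minimizers_tendsto_constrained_minimizer
    (n M : ℕ) (h : Fin M → EuclideanSpace ℝ (Fin n) → ℝ)
    (hconvex : ∀ m, ConvexOn ℝ Set.univ (h m)) (hcont : ∀ m, Continuous (h m))
    (W : Set (EuclideanSpace ℝ (Fin n)))
    (hWdef : W = {z | ∀ m, h m z ≤ 0}) (hWne : W.Nonempty)
    (G : EuclideanSpace ℝ (Fin n) → ℝ) (hGcont : Continuous G)
    (ρ : ℝ) (hρ : 0 < ρ)
    (hGstrong : ConvexOn ℝ Set.univ (fun z => G z - ρ / 2 * ‖z‖ ^ 2))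
    (zhat : EuclideanSpace ℝ (Fin n)) (hzhatW : zhat ∈ W)
    (hzhatmin : IsMinOn G W zhat)
    (hzhatuniq : ∀ y ∈ W, IsMinOn G W y → y = zhat)
    (g : EuclideanSpace ℝ (Fin n) → ℝ → ℝ)
    (hg : ∀ z ℓ, g z ℓ = ∑ m, Real.log (1 + Real.exp (ℓ * h m z)))
    (zpen : ℝ → EuclideanSpace ℝ (Fin n))
    (hzpenmin : ∀ ℓ : ℝ, 0 < ℓ → IsMinOn (fun z => G z + g z ℓ) Set.univ (zpen ℓ))
    (hzpenuniq : ∀ ℓ : ℝ, 0 < ℓ →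
      ∀ y, IsMinOn (fun z => G z + g z ℓ) Set.univ y → y = zpen ℓ)
    (hslater : ∀ δ : ℝ, 0 < δ → ∃ zt : EuclideanSpace ℝ (Fin n),
      ‖zt - zhat‖ < δ ∧ ∀ m, h m zt < 0) :
    Tendsto zpen atTop (nhds zhat) :=
  penalized_minimizers_tendsto_constrained_minimizer_general n M h hcont W hWdef G hGcont ρ hρ
    hGstrong zhat hzhatmin hzhatuniq g hg zpen hzpenmin hslater
end

section
/- Let n, M ∈ ℕ, let h_1, …, h_M : ℝⁿ → ℝ be convex continuous functions, and let W := {z ∈ ℝⁿ : h_m(z) ≤ 0 for all m ∈ [M]} be nonempty. Let G : ℝⁿ → ℝ be continuous and ρ-strongly convex for some ρ > 0, let ẑ be the unique minimizer of G over W, and for each ℓ > 0 let ẑ_ℓ be the unique minimizer over ℝⁿ of z ↦ G(z) + g(z; ℓ), where g(z; ℓ) := Σ_{m=1}^M ln(1 + e^{ℓ·h_m(z)}). Assume that for every δ > 0 there exists z̃ ∈ ℝⁿ with ‖z̃ − ẑ‖ < δ and h_m(z̃) < 0 for all m ∈ [M]. Then for every ε > 0 there exists ℓ' > 0 such that for all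 ℓ ≥ ℓ', G(ẑ_ℓ) + g(ẑ_ℓ; ℓ) < G(ẑ) + 2ε; consequently the optimal value G(ẑ_ℓ) + g(ẑ_ℓ; ℓ) of the penalized problem converges to the optimal value G(ẑ) of the constrained problem as ℓ → ∞. -/
set_option maxHeartbeats 1000000

open Filter

private lemma log1exp_nonneg (x : ℝ) : 0 ≤ Real.log (1 + Real.exp x) :=
  Real.log_nonneg (by linarith [Real.exp_pos x])

private lemma log1exp_ge (x : ℝ) : x ≤ Real.log (1 + Real.exp x) := by
  have := Real.log_le_log (Real.exp_pos x) (by linarith [Real.exp_pos x] : Real.exp x ≤ 1 + Real.exp x)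
  rwa [Real.log_exp] at this

private lemma log1exp_le_log2 {x : ℝ} (hx : x ≤ 0) : Real.log (1 + Real.exp x) ≤ Real.log 2 := by
  have h1 : Real.exp x ≤ 1 := Real.exp_le_one_iff.mpr hx
  have := Real.log_le_log (by linarith [Real.exp_pos x] : (0:ℝ) < 1 + Real.exp x)
    (by linarith : 1 + Real.exp x ≤ 2)
  exact this

private lemma tendsto_log1exp {c : ℝ} (hc : c < 0) :
    Tendsto (fun ℓ : ℝ => Real.log (1 + Real.exp (ℓ * c))) atTop (nhds 0) := by
  have h1 : Tendsto (fun ℓ : ℝ => ℓ * c) atTop atBot :=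
    Tendsto.atTop_mul_const_of_neg hc tendsto_id
  have h2 : Tendsto (fun ℓ : ℝ => Real.exp (ℓ * c)) atTop (nhds 0) :=
    Real.tendsto_exp_atBot.comp h1
  have h3 : Tendsto (fun ℓ : ℝ => 1 + Real.exp (ℓ * c)) atTop (nhds 1) := by
    simpa using tendsto_const_nhds.add h2
  have h4 : Tendsto Real.log (nhds (1:ℝ)) (nhds 0) := by
    have := (Real.continuousAt_log (by norm_num : (1:ℝ) ≠ 0)).tendsto
    simpa using this
  exact h4.comp h3

/-- The sandwich inequality in the proof of Proposition 3.2: convergence of the optimal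
values of the log-penalized problems to the constrained optimal value. -/
theorem penalized_optimal_values_tendsto_constrained_value
    (n M : ℕ) (h : Fin M → EuclideanSpace ℝ (Fin n) → ℝ)
    (hconvex : ∀ m, ConvexOn ℝ Set.univ (h m)) (hcont : ∀ m, Continuous (h m))
    (W : Set (EuclideanSpace ℝ (Fin n)))
    (hWdef : W = {z | ∀ m, h m z ≤ 0}) (hWne : W.Nonempty)
    (G : EuclideanSpace ℝ (Fin n) → ℝ) (hGcont : Continuous G)
    (ρ : ℝ) (hρ : 0 < ρ)
    (hGstrong : ConvexOn ℝ Set.univ (fun z => G z - ρ / 2 * ‖z‖ ^ 2))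
    (zhat : EuclideanSpace ℝ (Fin n)) (hzhatW : zhat ∈ W)
    (hzhatmin : IsMinOn G W zhat)
    (hzhatuniq : ∀ y ∈ W, IsMinOn G W y → y = zhat)
    (g : EuclideanSpace ℝ (Fin n) → ℝ → ℝ)
    (hg : ∀ z ℓ, g z ℓ = ∑ m, Real.log (1 + Real.exp (ℓ * h m z)))
    (zpen : ℝ → EuclideanSpace ℝ (Fin n))
    (hzpenmin : ∀ ℓ : ℝ, 0 < ℓ → IsMinOn (fun z => G z + g z ℓ) Set.univ (zpen ℓ))
    (hzpenuniq : ∀ ℓ : ℝ, 0 < ℓ →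
      ∀ y, IsMinOn (fun z => G z + g z ℓ) Set.univ y → y = zpen ℓ)
    (hslater : ∀ δ : ℝ, 0 < δ → ∃ zt : EuclideanSpace ℝ (Fin n),
      ‖zt - zhat‖ < δ ∧ ∀ m, h m zt < 0) :
    (∀ ε : ℝ, 0 < ε → ∃ ℓ' : ℝ, 0 < ℓ' ∧ ∀ ℓ : ℝ, ℓ' ≤ ℓ →
        G (zpen ℓ) + g (zpen ℓ) ℓ < G zhat + 2 * ε) ∧
      Tendsto (fun ℓ => G (zpen ℓ) + g (zpen ℓ) ℓ) atTop (nhds (G zhat)) := by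
  -- g is nonnegative
  have gnn : ∀ z ℓ, 0 ≤ g z ℓ := by
    intro z ℓ
    rw [hg]
    exact Finset.sum_nonneg fun m _ => log1exp_nonneg _
  -- minimality of zpen ℓ, pointwise
  have hmin : ∀ ℓ : ℝ, 0 < ℓ → ∀ x, G (zpen ℓ) + g (zpen ℓ) ℓ ≤ G x + g x ℓ := by
    intro ℓ hℓ x
    exact (isMinOn_iff.1 (hzpenmin ℓ hℓ)) x (Set.mem_univ x)
  -- zhat is a feasible point
  have hzhat_feas : ∀ m, h m zhat ≤ 0 := by
    rw [hWdef] at hzhatW; exact hzhatW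
  -- Part 1 : upper bound
  have upper : ∀ ε : ℝ, 0 < ε → ∃ ℓ' : ℝ, 0 < ℓ' ∧ ∀ ℓ : ℝ, ℓ' ≤ ℓ →
      G (zpen ℓ) + g (zpen ℓ) ℓ < G zhat + 2 * ε := by
    intro ε hε
    -- find a Slater point close enough that G is within ε
    obtain ⟨δ, hδ, hδG⟩ := Metric.continuous_iff.1 hGcont zhat ε hε
    obtain ⟨zt, hztδ, hzth⟩ := hslater δ hδ
    have hGzt : G zt < G zhat + ε := by
      have : dist zt zhat < δ := by rwa [dist_eq_norm]
      have := hδG zt this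
      have := abs_lt.1 (by rwa [Real.dist_eq] at this)
      linarith [this.2]
    -- g zt ℓ → 0
    have htend : Tendsto (fun ℓ : ℝ => g zt ℓ) atTop (nhds 0) := by
      have : Tendsto (fun ℓ : ℝ => ∑ m, Real.log (1 + Real.exp (ℓ * h m zt)))
          atTop (nhds (∑ _m : Fin M, (0:ℝ))) :=
        tendsto_finset_sum _ fun m _ => tendsto_log1exp (hzth m)
      simpa [hg] using this
    have hev : ∀ᶠ ℓ : ℝ in atTop, g zt ℓ < ε := htend.eventually_lt_const hε
    obtain ⟨a, ha⟩ := eventually_atTop.1 hev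
    refine ⟨max a 1, lt_of_lt_of_le one_pos (le_max_right _ _), fun ℓ hℓ => ?_⟩
    have hℓpos : 0 < ℓ := lt_of_lt_of_le one_pos (le_trans (le_max_right a 1) hℓ)
    have h1 : G (zpen ℓ) + g (zpen ℓ) ℓ ≤ G zt + g zt ℓ := hmin ℓ hℓpos zt
    have h2 : g zt ℓ < ε := ha ℓ (le_trans (le_max_left a 1) hℓ)
    linarith
  -- uniform upper bound on the penalized optimal values
  set B : ℝ := G zhat + M * Real.log 2 with hBdef
  have hvB : ∀ ℓ : ℝ, 0 < ℓ → G (zpen ℓ) + g (zpen ℓ) ℓ ≤ B := by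
    intro ℓ hℓ
    have h1 : G (zpen ℓ) + g (zpen ℓ) ℓ ≤ G zhat + g zhat ℓ := hmin ℓ hℓ zhat
    have h2 : g zhat ℓ ≤ M * Real.log 2 := by
      rw [hg]
      calc ∑ m, Real.log (1 + Real.exp (ℓ * h m zhat))
          ≤ ∑ _m : Fin M, Real.log 2 := by
            apply Finset.sum_le_sum
            intro m _
            exact log1exp_le_log2 (mul_nonpos_of_nonneg_of_nonpos hℓ.le (hzhat_feas m))
        _ = M * Real.log 2 := by simp [mul_comm]
    linarith
  -- coercivity: a radius R such that G z ≤ B forces ‖z‖ ≤ R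
  set F : EuclideanSpace ℝ (Fin n) → ℝ := fun z => G z - ρ / 2 * ‖z‖ ^ 2 with hFdef
  have hFcont : Continuous F := by
    apply hGcont.sub
    exact (continuous_const.mul ((continuous_norm).pow 2))
  clear_value F
  obtain ⟨x1, _, hx1'⟩ := (isCompact_closedBall (0 : EuclideanSpace ℝ (Fin n)) 1).exists_isMaxOn
    ⟨0, by simp⟩ (hFcont.abs.continuousOn)
  have hx1 : ∀ y ∈ Metric.closedBall (0 : EuclideanSpace ℝ (Fin n)) 1, |F y| ≤ |F x1| :=
    fun y hy => isMaxOn_iff.1 hx1' y hy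
  set D : ℝ := |F x1| with hDdef
  have hD0 : 0 ≤ D := abs_nonneg _
  have hDball : ∀ y ∈ Metric.closedBall (0 : EuclideanSpace ℝ (Fin n)) 1, |F y| ≤ D := hx1
  set R : ℝ := max 1 ((2 / ρ) * (2 * D + |B| + 1)) with hRdef
  have hR1 : (1:ℝ) ≤ R := le_max_left _ _
  clear_value B D R
  have hcoer : ∀ z, G z ≤ B → ‖z‖ ≤ R := by
    intro z hz
    by_contra hzR
    push_neg at hzR
    set r : ℝ := ‖z‖ with hrdef
    clear_value r
    have hr1 : 1 < r := lt_of_le_of_lt hR1 hzR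
    have hr0 : 0 < r := by linarith
    set u : EuclideanSpace ℝ (Fin n) := (r⁻¹) • z with hudef
    have hu1 : ‖u‖ = 1 := by
      rw [hudef, norm_smul, norm_inv, Real.norm_eq_abs, abs_of_pos hr0, ← hrdef,
        inv_mul_cancel₀ (ne_of_gt hr0)]
    have hFu : |F u| ≤ D := hDball u (by simp [Metric.mem_closedBall, dist_eq_norm, hu1])
    have hF0 : |F 0| ≤ D := hDball 0 (by simp)
    -- convexity inequality: F u ≤ r⁻¹ F z + (1 - r⁻¹) F 0
    have hconv := hGstrong.2 (Set.mem_univ z) (Set.mem_univ (0 : EuclideanSpace ℝ (Fin n)))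
      (le_of_lt (inv_pos.mpr hr0))
      (by rw [sub_nonneg]; exact inv_le_one_of_one_le₀ hr1.le)
      (by ring : r⁻¹ + (1 - r⁻¹) = 1)
    rw [smul_zero, add_zero] at hconv
    have hconv' : F u ≤ r⁻¹ * F z + (1 - r⁻¹) * F 0 := hconv
    -- hence F z ≥ r * F u - (r - 1) * F 0 ≥ -2 D r
    have hFz : F z ≥ r * F u - (r - 1) * F 0 := by
      have hmul := mul_le_mul_of_nonneg_left hconv' hr0.le
      have hrinv : r * r⁻¹ = 1 := mul_inv_cancel₀ (ne_of_gt hr0)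
      have hexp : r * (r⁻¹ * F z + (1 - r⁻¹) * F 0)
          = (r * r⁻¹) * F z + (r - r * r⁻¹) * F 0 := by ring
      rw [hexp, hrinv, one_mul] at hmul
      linarith
    have hFzlb : F z ≥ -(2 * D * r) := by
      have h1 : r * F u ≥ -(r * D) := by nlinarith [abs_le.1 hFu]
      have h2 : (r - 1) * F 0 ≤ (r - 1) * D := by nlinarith [abs_le.1 hF0]
      nlinarith
    -- so G z ≥ ρ/2 r² - 2 D r, contradiction with G z ≤ B for r large
    have hGz : G z = F z + ρ / 2 * r ^ 2 := by rw [hFdef, hrdef]; ring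
    have hrbig : (2 / ρ) * (2 * D + |B| + 1) < r :=
      lt_of_le_of_lt (by rw [hRdef]; exact le_max_right _ _) hzR
    have hBabs : B ≤ |B| := le_abs_self B
    have h5 : 2 * D + |B| + 1 < ρ / 2 * r := by
      have hhalf : (0:ℝ) < ρ / 2 := by positivity
      have h := mul_lt_mul_of_pos_left hrbig hhalf
      have heq : ρ / 2 * (2 / ρ * (2 * D + |B| + 1)) = 2 * D + |B| + 1 := by
        field_simp
      rw [heq] at h
      exact h
    have h6 := mul_lt_mul_of_pos_left h5 hr0
    have hz' : F z + ρ / 2 * r ^ 2 ≤ B := by rw [← hGz]; exact hz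
    have h6' : r * (2 * D + |B| + 1) < ρ / 2 * r ^ 2 := by
      have heq2 : r * (ρ / 2 * r) = ρ / 2 * r ^ 2 := by ring
      linarith
    have hA : ρ / 2 * r ^ 2 ≤ B + 2 * D * r := by linarith
    have hB2 : 2 * D * r + |B| * r + r < ρ / 2 * r ^ 2 := by
      have heq3 : r * (2 * D + |B| + 1) = 2 * D * r + |B| * r + r := by ring
      linarith
    have hC : |B| ≤ |B| * r := by
      have hnn := mul_nonneg (sub_nonneg.2 hr1.le) (abs_nonneg B)
      have heq4 : (r - 1) * |B| = |B| * r - |B| := by ring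
      linarith
    linarith
  -- Part 2 : lower bound
  set p : EuclideanSpace ℝ (Fin n) → ℝ := fun z => ∑ m, max (h m z) 0 with hpdef
  have hpcont : Continuous p := by
    apply continuous_finset_sum
    intro m _
    exact (hcont m).max continuous_const
  have hpnn : ∀ z, 0 ≤ p z := fun z =>
    Finset.sum_nonneg fun m _ => le_max_right _ _
  have hgp : ∀ z (ℓ : ℝ), 0 ≤ ℓ → ℓ * p z ≤ g z ℓ := by
    intro z ℓ hℓ
    rw [hg, hpdef, Finset.mul_sum]
    apply Finset.sum_le_sum
    intro m _
    rcases le_or_gt (h m z) 0 with hmz | hmz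
    · have : ℓ * max (h m z) 0 = 0 := by rw [max_eq_right hmz, mul_zero]
      rw [this]; exact log1exp_nonneg _
    · rw [max_eq_left hmz.le]
      exact log1exp_ge _
  set K : Set (EuclideanSpace ℝ (Fin n)) := Metric.closedBall 0 R with hKdef
  have hKcomp : IsCompact K := isCompact_closedBall _ _
  have lower : ∀ ε : ℝ, 0 < ε → ∃ ℓ' : ℝ, 0 < ℓ' ∧ ∀ ℓ : ℝ, ℓ' ≤ ℓ →
      G zhat - ε < G (zpen ℓ) + g (zpen ℓ) ℓ := by
    intro ε hε
    -- Claim A: points in K with small constraint violation have G close to G zhat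
    have claimA : ∃ t : ℝ, 0 < t ∧ ∀ z ∈ K, p z ≤ t → G zhat - ε < G z := by
      by_contra hcon
      push_neg at hcon
      have hcon' : ∀ t : ℝ, 0 < t → ∃ z ∈ K, p z ≤ t ∧ G z ≤ G zhat - ε := by
        intro t ht
        obtain ⟨z, hzK, hzp, hzG⟩ := hcon t ht
        exact ⟨z, hzK, hzp, hzG⟩
      set S : ℕ → Set (EuclideanSpace ℝ (Fin n)) :=
        fun k => {z ∈ K | p z ≤ 1 / (k + 1) ∧ G z ≤ G zhat - ε} with hSdef
      have hSsub : ∀ k, S (k + 1) ⊆ S k := by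
        intro k z hz
        refine ⟨hz.1, le_trans hz.2.1 ?_, hz.2.2⟩
        apply one_div_le_one_div_of_le
        · positivity
        · push_cast; linarith
      have hSne : ∀ k, (S k).Nonempty := by
        intro k
        obtain ⟨z, hzK, hzp, hzG⟩ := hcon' (1 / (k + 1)) (by positivity)
        exact ⟨z, hzK, hzp, hzG⟩
      have hSclosed : ∀ k, IsClosed (S k) := by
        intro k
        have : S k = K ∩ ({z | p z ≤ 1 / (k + 1)} ∩ {z | G z ≤ G zhat - ε}) := by
          ext z; simp [hSdef, Set.mem_setOf_eq]; tauto
        rw [this]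
        exact Metric.isClosed_closedBall.inter
          ((isClosed_le hpcont continuous_const).inter (isClosed_le hGcont continuous_const))
      have hScomp : IsCompact (S 0) :=
        hKcomp.of_isClosed_subset (hSclosed 0) (fun z hz => hz.1)
      obtain ⟨zs, hzs⟩ := IsCompact.nonempty_iInter_of_sequence_nonempty_isCompact_isClosed
        S hSsub hSne hScomp hSclosed
      simp only [Set.mem_iInter] at hzs
      have hpz : p zs ≤ 0 := by
        have hlim : Tendsto (fun k : ℕ => 1 / ((k:ℝ) + 1)) atTop (nhds 0) :=
          tendsto_one_div_add_atTop_nhds_zero_nat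
        exact ge_of_tendsto' hlim (fun k => (hzs k).2.1)
      have hpz0 : p zs = 0 := le_antisymm hpz (hpnn zs)
      have hfeas : ∀ m, h m zs ≤ 0 := by
        intro m
        have := (Finset.sum_eq_zero_iff_of_nonneg
          (fun i _ => le_max_right (h i zs) 0)).1 hpz0 m (Finset.mem_univ m)
        by_contra hmz
        push_neg at hmz
        rw [max_eq_left hmz.le] at this
        exact absurd this (ne_of_gt hmz)
      have hzsW : zs ∈ W := by rw [hWdef]; exact hfeas
      have := isMinOn_iff.1 hzhatmin zs hzsW
      have := (hzs 0).2.2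
      linarith
    obtain ⟨t, ht, hclaim⟩ := claimA
    -- minimum of G over K
    obtain ⟨x0, _, hx0'⟩ := hKcomp.exists_isMinOn
      ⟨0, by simp [hKdef, Metric.mem_closedBall]; linarith⟩ hGcont.continuousOn
    have hx0 : ∀ y ∈ K, G x0 ≤ G y := fun y hy => isMinOn_iff.1 hx0' y hy
    set c : ℝ := G x0 with hcdef
    refine ⟨max 1 ((G zhat - ε - c) / t + 1), lt_of_lt_of_le one_pos (le_max_left _ _),
      fun ℓ hℓ => ?_⟩
    have hℓ1 : (1:ℝ) ≤ ℓ := le_trans (le_max_left _ _) hℓ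
    have hℓpos : 0 < ℓ := lt_of_lt_of_le one_pos hℓ1
    have hℓt : (G zhat - ε - c) / t + 1 ≤ ℓ := le_trans (le_max_right _ _) hℓ
    -- zpen ℓ lies in K
    have hGle : G (zpen ℓ) ≤ B := le_trans (by linarith [gnn (zpen ℓ) ℓ]) (hvB ℓ hℓpos)
    have hzK : zpen ℓ ∈ K := by
      simp only [hKdef, Metric.mem_closedBall, dist_eq_norm, sub_zero]
      exact hcoer _ hGle
    rcases le_or_gt (p (zpen ℓ)) t with hpt | hpt
    · have h1 : G zhat - ε < G (zpen ℓ) := hclaim _ hzK hpt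
      linarith [gnn (zpen ℓ) ℓ]
    · have h1 : c ≤ G (zpen ℓ) := hx0 _ hzK
      have h2 : ℓ * p (zpen ℓ) ≤ g (zpen ℓ) ℓ := hgp _ ℓ hℓpos.le
      have h3 : ℓ * t ≤ ℓ * p (zpen ℓ) := by nlinarith
      have h4 : G zhat - ε - c < ℓ * t := by
        have : (G zhat - ε - c) / t < ℓ := by linarith
        calc G zhat - ε - c = ((G zhat - ε - c) / t) * t := by field_simp
          _ < ℓ * t := by nlinarith
      linarith
  refine ⟨upper, ?_⟩
  rw [tendsto_order]
  constructor
  · intro a ha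
    obtain ⟨ℓ', hℓ'pos, hℓ'⟩ := lower (G zhat - a) (by linarith)
    filter_upwards [eventually_ge_atTop ℓ'] with ℓ hℓ
    have := hℓ' ℓ hℓ
    linarith
  · intro a ha
    obtain ⟨ℓ', hℓ'pos, hℓ'⟩ := upper ((a - G zhat) / 2) (by linarith)
    filter_upwards [eventually_ge_atTop ℓ'] with ℓ hℓ
    have := hℓ' ℓ hℓ
    linarith
end

section
/- Let n, M ∈ ℕ, ε̄, Δ, ρ, η, ℓ > 0, let h_1, …, h_M : ℝⁿ → ℝ be convex twice continuously differentiable, and let w, λ, z₀ ∈ ℝⁿ. For a ∈ ℝⁿ and noise ξ ∈ ℝⁿ let Φ_a(ξ) denote the unique minimizer over ℝⁿ of z ↦ ⟨a, z⟩ + (ρ/2)‖w − z + (λ − ξ)/ρ‖² + (1/(2η))‖z − z₀‖² + Σ_{m=1}^M ln(1 + e^{ℓ·h_m(z)}). If a, a' ∈ ℝⁿ satisfy ‖a − a'‖₁ ≤ Δ, then for every Borel set S ⊆ ℝⁿ, e^{−ε̄}·Lap(ε̄,Δ)(Φ_{a'}⁻¹(S)) ≤ Lap(ε̄,Δ)(Φ_a⁻¹(S))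 ≤ e^{ε̄}·Lap(ε̄,Δ)(Φ_{a'}⁻¹(S)). -/
open MeasureTheory
open scoped RealInnerProductSpace ENNReal

/-! Changing the linear coefficient from `a` to `a'` changes the objective only by a constant in
`z` once the noise is moved from `ξ` to `ξ + (a - a')`, so `Φ a ξ = Φ a' (ξ + (a - a'))` and
`Φ a ⁻¹' S` is a translate of `Φ a' ⁻¹' S` by a vector of `ℓ₁`-norm at most `Δ`. Under such a
translation the Laplace density changes by a factor of at most `exp ε`. -/

/-- The Laplace measure `Lap(ε̄, Δ)` on `ℝⁿ`, with density
`ξ ↦ (ε̄/(2Δ))ⁿ · exp(−(ε̄/Δ)·‖ξ‖₁)` with respect to Lebesgue measure. -/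
noncomputable def lapMeasure (n : ℕ) (ε Δ : ℝ) : Measure (EuclideanSpace ℝ (Fin n)) :=
  volume.withDensity fun ξ =>
    ENNReal.ofReal ((ε / (2 * Δ)) ^ n * Real.exp (-(ε / Δ) * ∑ i, |ξ i|))

theorem MeasureTheory.Measure.withDensity_preimage_add_right_le {G : Type*} [MeasurableSpace G]
    [AddGroup G] [MeasurableAdd G] (μ : Measure G) [SFinite μ] [μ.IsAddRightInvariant]
    {d : G → ℝ≥0∞} (hd : Measurable d) {v : G} {C : ℝ≥0∞} (hdC : ∀ x, d x ≤ C * d (x + v))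
    (A : Set G) :
    μ.withDensity d ((· + v) ⁻¹' A) ≤ C * μ.withDensity d A := by
  rw [withDensity_apply' _ _, withDensity_apply' _ _]
  calc ∫⁻ x in (· + v) ⁻¹' A, d x ∂μ
      ≤ ∫⁻ x in (· + v) ⁻¹' A, C * d (x + v) ∂μ := lintegral_mono fun x => hdC x
    _ = C * ∫⁻ x in (· + v) ⁻¹' A, d (x + v) ∂μ :=
      lintegral_const_mul _ (hd.comp (measurable_add_const v))
    _ = C * ∫⁻ x in A, d x ∂μ := by
      rw [(measurePreserving_add_right μ v).setLIntegral_comp_preimage_emb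
        (MeasurableEquiv.addRight v).measurableEmbedding]

theorem Real.exp_neg_mul_sum_abs_le {ι : Type*} [Fintype ι] {ε Δ : ℝ} (hε : 0 ≤ ε) (hΔ : 0 < Δ)
    (x v : ι → ℝ) (hv : ∑ i, |v i| ≤ Δ) :
    Real.exp (-(ε / Δ) * ∑ i, |x i|) ≤ Real.exp ε * Real.exp (-(ε / Δ) * ∑ i, |x i + v i|) := by
  rw [← Real.exp_add, Real.exp_le_exp]
  have htri : ∑ i, |x i + v i| ≤ ∑ i, |x i| + Δ := by
    grw [← hv, ← Finset.sum_add_distrib]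
    exact Finset.sum_le_sum fun i _ => abs_add_le _ _
  have hscale : ε / Δ * Δ = ε := div_mul_cancel₀ ε hΔ.ne'
  nlinarith [div_nonneg hε hΔ.le]

theorem lapMeasure_preimage_add_le (n : ℕ) {ε Δ : ℝ} (hε : 0 ≤ ε) (hΔ : 0 < Δ)
    {v : EuclideanSpace ℝ (Fin n)} (hv : ∑ i, |v i| ≤ Δ) (A : Set (EuclideanSpace ℝ (Fin n))) :
    lapMeasure n ε Δ ((· + v) ⁻¹' A) ≤ ENNReal.ofReal (Real.exp ε) * lapMeasure n ε Δ A := by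
  refine volume.withDensity_preimage_add_right_le (by fun_prop) (fun ξ => ?_) A
  rw [← ENNReal.ofReal_mul (Real.exp_pos ε).le, mul_left_comm]
  gcongr
  exact Real.exp_neg_mul_sum_abs_le hε hΔ (fun i => ξ i) (fun i => v i) hv

theorem ENNReal.ofReal_exp_neg_mul_le {x y : ℝ≥0∞} {c : ℝ}
    (h : x ≤ ENNReal.ofReal (Real.exp c) * y) : ENNReal.ofReal (Real.exp (-c)) * x ≤ y := by
  calc ENNReal.ofReal (Real.exp (-c)) * x
      ≤ ENNReal.ofReal (Real.exp (-c)) * (ENNReal.ofReal (Real.exp c) * y) := by gcongr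
    _ = y := by
      rw [← mul_assoc, ← ENNReal.ofReal_mul (Real.exp_pos _).le, ← Real.exp_add, neg_add_cancel,
        Real.exp_zero, ENNReal.ofReal_one, one_mul]

theorem IsMinOn.of_forall_eq_add_const {α : Type*} {f g : α → ℝ} {s : Set α} {x : α} {c : ℝ}
    (hfg : ∀ z, f z = g z + c) (hg : IsMinOn g s x) : IsMinOn f s x :=
  isMinOn_iff.2 fun y hy => by linarith [isMinOn_iff.1 hg y hy, hfg x, hfg y]

theorem exists_inner_add_prox_sq_eq_shift_add {E : Type*} [NormedAddCommGroup E]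
    [InnerProductSpace ℝ E] {ρ : ℝ} (hρ : ρ ≠ 0) (b b' w lam ξ : E) :
    ∃ c : ℝ, ∀ z : E, ⟪b, z⟫ + ρ / 2 * ‖w - z + ρ⁻¹ • (lam - ξ)‖ ^ 2 =
      ⟪b', z⟫ + ρ / 2 * ‖w - z + ρ⁻¹ • (lam - (ξ + (b - b')))‖ ^ 2 + c := by
  refine ⟨⟪w, b - b'⟫ + ρ⁻¹ * ⟪lam - ξ, b - b'⟫ - (2 * ρ)⁻¹ * ‖b - b'‖ ^ 2, fun z => ?_⟩
  have hshift : w - z + ρ⁻¹ • (lam - (ξ + (b - b'))) =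
      (w - z + ρ⁻¹ • (lam - ξ)) - ρ⁻¹ • (b - b') := by module
  rw [hshift, norm_sub_sq_real, norm_smul, real_inner_smul_right, inner_add_left, inner_sub_left,
    real_inner_smul_left, mul_pow, Real.norm_eq_abs, sq_abs]
  have hz : ⟪b, z⟫ - ⟪b', z⟫ = ⟪z, b - b'⟫ := by
    rw [inner_sub_right, real_inner_comm b z, real_inner_comm b' z]
  field_simp
  linear_combination (2 * ρ) * hz

theorem penalized_prox_subproblem_DP_general
    (n M : ℕ) (ε Δ ρ η ℓ : ℝ) (hε : 0 < ε) (hΔ : 0 < Δ) (hρ : 0 < ρ)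
    (h : Fin M → EuclideanSpace ℝ (Fin n) → ℝ)
    (w lam z₀ : EuclideanSpace ℝ (Fin n))
    (Φ : EuclideanSpace ℝ (Fin n) → EuclideanSpace ℝ (Fin n) → EuclideanSpace ℝ (Fin n))
    (hΦ : ∀ a ξ : EuclideanSpace ℝ (Fin n),
      IsMinOn (fun z => ⟪a, z⟫ + ρ / 2 * ‖w - z + ρ⁻¹ • (lam - ξ)‖ ^ 2 +
          1 / (2 * η) * ‖z - z₀‖ ^ 2 + ∑ m, Real.log (1 + Real.exp (ℓ * h m z)))
        Set.univ (Φ a ξ) ∧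
      ∀ y, IsMinOn (fun z => ⟪a, z⟫ + ρ / 2 * ‖w - z + ρ⁻¹ • (lam - ξ)‖ ^ 2 +
          1 / (2 * η) * ‖z - z₀‖ ^ 2 + ∑ m, Real.log (1 + Real.exp (ℓ * h m z)))
        Set.univ y → y = Φ a ξ)
    (a a' : EuclideanSpace ℝ (Fin n)) (ha : ∑ i, |a i - a' i| ≤ Δ)
    (S : Set (EuclideanSpace ℝ (Fin n))) :
    ENNReal.ofReal (Real.exp (-ε)) * lapMeasure n ε Δ (Φ a' ⁻¹' S) ≤
        lapMeasure n ε Δ (Φ a ⁻¹' S) ∧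
      lapMeasure n ε Δ (Φ a ⁻¹' S) ≤
        ENNReal.ofReal (Real.exp ε) * lapMeasure n ε Δ (Φ a' ⁻¹' S) := by
  have hshift (b b' ξ : EuclideanSpace ℝ (Fin n)) : Φ b ξ = Φ b' (ξ + (b - b')) := by
    obtain ⟨c, hc⟩ := exists_inner_add_prox_sq_eq_shift_add hρ.ne' b b' w lam ξ
    refine ((hΦ b ξ).2 _ ((hΦ b' _).1.of_forall_eq_add_const (c := c) fun z => ?_)).symm
    rw [hc z]
    ring
  have hone_sided (b b' : EuclideanSpace ℝ (Fin n)) (hb : ∑ i, |b i - b' i| ≤ Δ) :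
      lapMeasure n ε Δ (Φ b ⁻¹' S) ≤
        ENNReal.ofReal (Real.exp ε) * lapMeasure n ε Δ (Φ b' ⁻¹' S) := by
    have hpre : Φ b ⁻¹' S = (· + (b - b')) ⁻¹' (Φ b' ⁻¹' S) := by
      ext ξ
      simp only [Set.mem_preimage, hshift b b' ξ]
    rw [hpre]
    exact lapMeasure_preimage_add_le n hε.le hΔ (by simpa using hb) _
  refine ⟨ENNReal.ofReal_exp_neg_mul_le (hone_sided a' a ?_), hone_sided a a' ha⟩
  simpa only [abs_sub_comm] using ha

/-- Proposition 3.3: the log-penalized unconstrained proximal subproblem with Laplace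
objective perturbation is `ε̄`-differentially private with respect to perturbations of
the linear coefficient of `ℓ₁`-magnitude at most `Δ`. -/
theorem penalized_prox_subproblem_DP
    (n M : ℕ) (ε Δ ρ η ℓ : ℝ) (hε : 0 < ε) (hΔ : 0 < Δ) (hρ : 0 < ρ) (hη : 0 < η)
    (hℓ : 0 < ℓ)
    (h : Fin M → EuclideanSpace ℝ (Fin n) → ℝ)
    (hconvex : ∀ m, ConvexOn ℝ Set.univ (h m)) (hsmooth : ∀ m, ContDiff ℝ 2 (h m))
    (w lam z₀ : EuclideanSpace ℝ (Fin n))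
    (Φ : EuclideanSpace ℝ (Fin n) → EuclideanSpace ℝ (Fin n) → EuclideanSpace ℝ (Fin n))
    (hΦ : ∀ a ξ : EuclideanSpace ℝ (Fin n),
      IsMinOn (fun z => ⟪a, z⟫ + ρ / 2 * ‖w - z + ρ⁻¹ • (lam - ξ)‖ ^ 2 +
          1 / (2 * η) * ‖z - z₀‖ ^ 2 + ∑ m, Real.log (1 + Real.exp (ℓ * h m z)))
        Set.univ (Φ a ξ) ∧
      ∀ y, IsMinOn (fun z => ⟪a, z⟫ + ρ / 2 * ‖w - z + ρ⁻¹ • (lam - ξ)‖ ^ 2 +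
          1 / (2 * η) * ‖z - z₀‖ ^ 2 + ∑ m, Real.log (1 + Real.exp (ℓ * h m z)))
        Set.univ y → y = Φ a ξ)
    (a a' : EuclideanSpace ℝ (Fin n)) (ha : ∑ i, |a i - a' i| ≤ Δ)
    (S : Set (EuclideanSpace ℝ (Fin n))) (hS : MeasurableSet S) :
    ENNReal.ofReal (Real.exp (-ε)) * lapMeasure n ε Δ (Φ a' ⁻¹' S) ≤
        lapMeasure n ε Δ (Φ a ⁻¹' S) ∧
      lapMeasure n ε Δ (Φ a ⁻¹' S) ≤
        ENNReal.ofReal (Real.exp ε) * lapMeasure n ε Δ (Φ a' ⁻¹' S) :=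
  penalized_prox_subproblem_DP_general n M ε Δ ρ η ℓ hε hΔ hρ h w lam z₀ Φ hΦ a a' ha S
end

section
/- Let n, M ∈ ℕ, ε̄, Δ, ρ, η > 0, let h_1, …, h_M : ℝⁿ → ℝ be convex twice continuously differentiable, let W := {z ∈ ℝⁿ : h_m(z) ≤ 0 for all m ∈ [M]} be nonempty, compact, and convex, and assume that for every z ∈ W and every δ > 0 there exists z̃ ∈ ℝⁿ with ‖z̃ − z‖ < δ and h_m(z̃) < 0 for all m ∈ [M]. Let w, λ, z₀ ∈ ℝⁿ, and for a ∈ ℝⁿ and noise ξ ∈ ℝⁿ let Ψ_a(ξ) denote the unique minimizer over W of z ↦ ⟨a, z⟩ + (ρ/2)‖w − z + (λ − ξ)/ρ‖² + (1/(2η))‖z − z₀‖². If a, a' ∈ ℝⁿ satisfy ‖a − a'‖₁ ≤ Δ, then for every Borel set S ⊆ ℝⁿ, e^{−ε̄}·Lap(ε̄,Δ)(Ψ_{a'}⁻¹(S)) ≤ Lap(ε̄,Δ)(Ψ_a⁻¹(S)) ≤ e^{ε̄}·Lap(ε̄,Δ)(Ψ_{a'}⁻¹(S)). -/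
open MeasureTheory
open scoped RealInnerProductSpace
open scoped ENNReal

/-- Shifting a set by a vector of `ℓ₁`-norm at most `Δ` changes its Laplace measure by a
factor of at most `e^ε`. -/
lemma lapMeasure_shift_le (n : ℕ) (ε Δ : ℝ) (hε : 0 < ε) (hΔ : 0 < Δ)
    (d : EuclideanSpace ℝ (Fin n)) (hd : ∑ i, |d i| ≤ Δ) (A : Set (EuclideanSpace ℝ (Fin n))) :
    lapMeasure n ε Δ ((fun ξ => ξ + d) ⁻¹' A) ≤ ENNReal.ofReal (Real.exp ε) * lapMeasure n ε Δ A := by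
  set g : EuclideanSpace ℝ (Fin n) → ℝ≥0∞ := fun ξ =>
    ENNReal.ofReal ((ε / (2 * Δ)) ^ n * Real.exp (-(ε / Δ) * ∑ i, |ξ i|)) with hg
  have hgm : Measurable g := by fun_prop
  -- pointwise bound on the density
  have hpt : ∀ y : EuclideanSpace ℝ (Fin n), g (y - d) ≤ ENNReal.ofReal (Real.exp ε) * g y := by
    intro y
    rw [hg]
    simp only
    rw [← ENNReal.ofReal_mul (Real.exp_nonneg ε)]
    apply ENNReal.ofReal_le_ofReal
    have hK : (0:ℝ) ≤ (ε / (2 * Δ)) ^ n := by positivity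
    have hsum : ∑ i, |y i| - Δ ≤ ∑ i, |(y - d) i| := by
      have : ∀ i ∈ Finset.univ, |y i| - |d i| ≤ |(y - d) i| := by
        intro i _
        simp only [PiLp.sub_apply]
        have := abs_sub_abs_le_abs_sub (y i) (d i)
        linarith [this]
      have h2 := Finset.sum_le_sum this
      rw [Finset.sum_sub_distrib] at h2
      linarith
    have hexp : Real.exp (-(ε / Δ) * ∑ i, |(y - d) i|) ≤
        Real.exp ε * Real.exp (-(ε / Δ) * ∑ i, |y i|) := by
      rw [← Real.exp_add]
      apply Real.exp_le_exp.2
      have hεΔ : 0 < ε / Δ := div_pos hε hΔ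
      have h3 : (ε / Δ) * (∑ i, |y i| - ∑ i, |(y - d) i|) ≤ (ε / Δ) * Δ := by
        apply mul_le_mul_of_nonneg_left _ hεΔ.le
        linarith
      have h4 : (ε / Δ) * Δ = ε := div_mul_cancel₀ ε hΔ.ne'
      nlinarith
    calc (ε / (2 * Δ)) ^ n * Real.exp (-(ε / Δ) * ∑ i, |(y - d) i|)
        ≤ (ε / (2 * Δ)) ^ n * (Real.exp ε * Real.exp (-(ε / Δ) * ∑ i, |y i|)) :=
          mul_le_mul_of_nonneg_left hexp hK
      _ = Real.exp ε * ((ε / (2 * Δ)) ^ n * Real.exp (-(ε / Δ) * ∑ i, |y i|)) := by ring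
  -- the inequality for measurable sets
  have key : ∀ t : Set (EuclideanSpace ℝ (Fin n)), MeasurableSet t →
      lapMeasure n ε Δ ((fun ξ => ξ + d) ⁻¹' t) ≤
        ENNReal.ofReal (Real.exp ε) * lapMeasure n ε Δ t := by
    intro t ht
    have hpre : MeasurableSet ((fun ξ => ξ + d) ⁻¹' t) := ht.preimage (by fun_prop)
    rw [lapMeasure, withDensity_apply _ hpre, withDensity_apply _ ht]
    have emb : MeasurableEmbedding (fun x : EuclideanSpace ℝ (Fin n) => x + d) :=
      (MeasurableEquiv.addRight d).measurableEmbedding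
    have mp : MeasurePreserving (fun x : EuclideanSpace ℝ (Fin n) => x + d) volume volume :=
      measurePreserving_add_right volume d
    calc ∫⁻ x in (fun ξ => ξ + d) ⁻¹' t, g x ∂volume
        = ∫⁻ x, ((fun ξ => ξ + d) ⁻¹' t).indicator g x ∂volume := (lintegral_indicator hpre g).symm
      _ = ∫⁻ x, t.indicator (fun y => g (y - d)) (x + d) ∂volume := by
          congr 1; funext x
          by_cases hx : x + d ∈ t <;> simp [Set.indicator, hx]
      _ = ∫⁻ y, t.indicator (fun y => g (y - d)) y ∂volume :=
          mp.lintegral_comp_emb emb _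
      _ = ∫⁻ y in t, g (y - d) ∂volume := lintegral_indicator ht _
      _ ≤ ∫⁻ y in t, ENNReal.ofReal (Real.exp ε) * g y ∂volume :=
          lintegral_mono fun y => hpt y
      _ = ENNReal.ofReal (Real.exp ε) * ∫⁻ y in t, g y ∂volume :=
          lintegral_const_mul _ hgm
  -- extend to arbitrary sets via measurable hulls
  set μ := lapMeasure n ε Δ
  calc μ ((fun ξ => ξ + d) ⁻¹' A)
      ≤ μ ((fun ξ => ξ + d) ⁻¹' (toMeasurable μ A)) :=
        measure_mono (Set.preimage_mono (subset_toMeasurable μ A))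
    _ ≤ ENNReal.ofReal (Real.exp ε) * μ (toMeasurable μ A) :=
        key _ (measurableSet_toMeasurable μ A)
    _ = ENNReal.ofReal (Real.exp ε) * μ A := by rw [measure_toMeasurable]

/-- The two objectives differ by a constant (in `z`) when the noise compensates the
perturbation of the linear coefficient. -/
lemma objective_shift (n : ℕ) (ρ η : ℝ) (hρ : 0 < ρ)
    (w lam z₀ a a' ξ z : EuclideanSpace ℝ (Fin n)) :
    ⟪a, z⟫ + ρ / 2 * ‖w - z + ρ⁻¹ • (lam - ξ)‖ ^ 2 + 1 / (2 * η) * ‖z - z₀‖ ^ 2 =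
      (⟪a', z⟫ + ρ / 2 * ‖w - z + ρ⁻¹ • (lam - (ξ + (a - a')))‖ ^ 2 +
        1 / (2 * η) * ‖z - z₀‖ ^ 2) +
      (⟪w, a - a'⟫ + ρ⁻¹ * ⟪lam - ξ, a - a'⟫ - ρ / 2 * (ρ⁻¹ ^ 2 * ‖a - a'‖ ^ 2)) := by
  have hu : w - z + ρ⁻¹ • (lam - (ξ + (a - a'))) =
      (w - z + ρ⁻¹ • (lam - ξ)) - ρ⁻¹ • (a - a') := by module
  rw [hu, norm_sub_sq_real (w - z + ρ⁻¹ • (lam - ξ)) (ρ⁻¹ • (a - a'))]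
  rw [real_inner_smul_right, norm_smul, Real.norm_eq_abs, abs_of_pos (inv_pos.2 hρ), mul_pow]
  rw [inner_add_left, inner_sub_left, real_inner_smul_left]
  have h1 : ⟪a, z⟫ = ⟪a', z⟫ + ⟪a - a', z⟫ := by
    rw [inner_sub_left]; ring
  rw [h1, real_inner_comm (a - a') z]
  have hρ' : ρ ≠ 0 := hρ.ne'
  field_simp
  ring

/-- Theorem 3.4: the constrained proximal ADMM subproblem with Laplace objective
perturbation is `ε̄`-differentially private with respect to perturbations of the linear
coefficient of `ℓ₁`-magnitude at most `Δ`. -/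
theorem constrained_prox_subproblem_DP
    (n M : ℕ) (ε Δ ρ η : ℝ) (hε : 0 < ε) (hΔ : 0 < Δ) (hρ : 0 < ρ) (hη : 0 < η)
    (h : Fin M → EuclideanSpace ℝ (Fin n) → ℝ)
    (hconvex : ∀ m, ConvexOn ℝ Set.univ (h m)) (hsmooth : ∀ m, ContDiff ℝ 2 (h m))
    (W : Set (EuclideanSpace ℝ (Fin n))) (hWdef : W = {z | ∀ m, h m z ≤ 0})
    (hWne : W.Nonempty) (hWcomp : IsCompact W) (hWconvex : Convex ℝ W)
    (hslater : ∀ z ∈ W, ∀ δ : ℝ, 0 < δ →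
      ∃ zt : EuclideanSpace ℝ (Fin n), ‖zt - z‖ < δ ∧ ∀ m, h m zt < 0)
    (w lam z₀ : EuclideanSpace ℝ (Fin n))
    (Ψ : EuclideanSpace ℝ (Fin n) → EuclideanSpace ℝ (Fin n) → EuclideanSpace ℝ (Fin n))
    (hΨ : ∀ a ξ : EuclideanSpace ℝ (Fin n),
      (Ψ a ξ ∈ W ∧
        IsMinOn (fun z => ⟪a, z⟫ + ρ / 2 * ‖w - z + ρ⁻¹ • (lam - ξ)‖ ^ 2 +
          1 / (2 * η) * ‖z - z₀‖ ^ 2) W (Ψ a ξ)) ∧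
      ∀ y ∈ W, IsMinOn (fun z => ⟪a, z⟫ + ρ / 2 * ‖w - z + ρ⁻¹ • (lam - ξ)‖ ^ 2 +
          1 / (2 * η) * ‖z - z₀‖ ^ 2) W y → y = Ψ a ξ)
    (a a' : EuclideanSpace ℝ (Fin n)) (ha : ∑ i, |a i - a' i| ≤ Δ)
    (S : Set (EuclideanSpace ℝ (Fin n))) (hS : MeasurableSet S) :
    ENNReal.ofReal (Real.exp (-ε)) * lapMeasure n ε Δ (Ψ a' ⁻¹' S) ≤
        lapMeasure n ε Δ (Ψ a ⁻¹' S) ∧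
      lapMeasure n ε Δ (Ψ a ⁻¹' S) ≤
        ENNReal.ofReal (Real.exp ε) * lapMeasure n ε Δ (Ψ a' ⁻¹' S) := by
  set d := a - a' with hd
  have hdsum : ∑ i, |d i| ≤ Δ := by
    simpa [hd] using ha
  have hdsum' : ∑ i, |(-d) i| ≤ Δ := by
    simpa using hdsum
  -- the minimizer shifts with the noise
  have key : ∀ ξ : EuclideanSpace ℝ (Fin n), Ψ a ξ = Ψ a' (ξ + d) := by
    intro ξ
    have hmem := (hΨ a ξ).1.1
    have hmin := (hΨ a ξ).1.2
    refine (hΨ a' (ξ + d)).2 (Ψ a ξ) hmem ?_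
    rw [isMinOn_iff]
    intro y hy
    have h1 := (isMinOn_iff.1 hmin) y hy
    have h2 := objective_shift n ρ η hρ w lam z₀ a a' ξ (Ψ a ξ)
    have h3 := objective_shift n ρ η hρ w lam z₀ a a' ξ y
    simp only [hd] at h2 h3 ⊢
    linarith
  -- rewrite the two preimages as shifts of each other
  have hpre1 : Ψ a ⁻¹' S = (fun ξ => ξ + d) ⁻¹' (Ψ a' ⁻¹' S) := by
    ext ξ; simp [key ξ]
  have hpre2 : Ψ a' ⁻¹' S = (fun ξ => ξ + (-d)) ⁻¹' (Ψ a ⁻¹' S) := by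
    ext ξ
    have := key (ξ + -d)
    simp only [Set.mem_preimage]
    rw [this]
    simp
  constructor
  · -- lower bound
    have h1 : lapMeasure n ε Δ (Ψ a' ⁻¹' S) ≤
        ENNReal.ofReal (Real.exp ε) * lapMeasure n ε Δ (Ψ a ⁻¹' S) := by
      rw [hpre2]
      exact lapMeasure_shift_le n ε Δ hε hΔ (-d) hdsum' _
    calc ENNReal.ofReal (Real.exp (-ε)) * lapMeasure n ε Δ (Ψ a' ⁻¹' S)
        ≤ ENNReal.ofReal (Real.exp (-ε)) *
            (ENNReal.ofReal (Real.exp ε) * lapMeasure n ε Δ (Ψ a ⁻¹' S)) :=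
          mul_le_mul_right h1 _
      _ = (ENNReal.ofReal (Real.exp (-ε)) * ENNReal.ofReal (Real.exp ε)) *
            lapMeasure n ε Δ (Ψ a ⁻¹' S) := by rw [mul_assoc]
      _ = lapMeasure n ε Δ (Ψ a ⁻¹' S) := by
          rw [← ENNReal.ofReal_mul (Real.exp_nonneg _), ← Real.exp_add]
          simp
  · -- upper bound
    rw [hpre1]
    exact lapMeasure_shift_le n ε Δ hε hΔ d hdsum _
end

section
/- Let n, M ∈ ℕ, ε̄, Δ, ρ, ℓ > 0, let h_1, …, h_M : ℝⁿ → ℝ be convex twice continuously differentiable, and let w, λ ∈ ℝⁿ. For a ∈ ℝⁿ and noise ξ ∈ ℝⁿ let Φ_a(ξ) denote the unique minimizer over ℝⁿ of z ↦ ⟨a, z⟩ + (ρ/2)‖w − z + (λ − ξ)/ρ‖² + Σ_{m=1}^M ln(1 + e^{ℓ·h_m(z)}). If a, a' ∈ ℝⁿ satisfy ‖a − a'‖₁ ≤ Δ, then for every Borel set S ⊆ ℝⁿ, e^{−ε̄}·Lap(ε̄,Δ)(Φ_{a'}⁻¹(S)) ≤ Lap(ε̄,Δ)(Φ_a⁻¹(S))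 ≤ e^{ε̄}·Lap(ε̄,Δ)(Φ_{a'}⁻¹(S)). -/
open MeasureTheory
open scoped RealInnerProductSpace ENNReal

/-- Translation inequality for the Laplace measure: shifting by a vector of
`ℓ₁`-norm at most `Δ` changes the measure of any set by a factor at most `e^ε`. -/
lemma lap_shift_le (n : ℕ) (ε Δ : ℝ) (hε : 0 < ε) (hΔ : 0 < Δ)
    (v : EuclideanSpace ℝ (Fin n)) (hv : ∑ i, |v i| ≤ Δ)
    (B : Set (EuclideanSpace ℝ (Fin n))) :
    lapMeasure n ε Δ ((fun ξ => ξ + v) ⁻¹' B) ≤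
      ENNReal.ofReal (Real.exp ε) * lapMeasure n ε Δ B := by
  set g : EuclideanSpace ℝ (Fin n) → ℝ≥0∞ := fun ξ =>
    ENNReal.ofReal ((ε / (2 * Δ)) ^ n * Real.exp (-(ε / Δ) * ∑ i, |ξ i|)) with hg
  have hc : (0:ℝ) ≤ (ε / (2 * Δ)) ^ n := by positivity
  have hpt : ∀ ξ : EuclideanSpace ℝ (Fin n),
      g ξ ≤ ENNReal.ofReal (Real.exp ε) * g (ξ + v) := by
    intro ξ
    rw [hg, ← ENNReal.ofReal_mul (Real.exp_nonneg ε)]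
    apply ENNReal.ofReal_le_ofReal
    have hsum : ∑ i, |(ξ + v) i| ≤ (∑ i, |ξ i|) + Δ := by
      have : ∑ i, |(ξ + v) i| ≤ ∑ i, (|ξ i| + |v i|) := by
        apply Finset.sum_le_sum
        intro i _
        simp only [PiLp.add_apply]
        exact abs_add_le _ _
      rw [Finset.sum_add_distrib] at this
      linarith
    have hexp : Real.exp (-(ε / Δ) * ∑ i, |ξ i|) ≤
        Real.exp ε * Real.exp (-(ε / Δ) * ∑ i, |(ξ + v) i|) := by
      rw [← Real.exp_add]
      apply Real.exp_le_exp.2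
      have hεΔ : 0 < ε / Δ := div_pos hε hΔ
      have hcan : ε / Δ * Δ = ε := div_mul_cancel₀ ε hΔ.ne'
      nlinarith [mul_le_mul_of_nonneg_left hsum hεΔ.le]
    nlinarith [Real.exp_nonneg (-(ε / Δ) * ∑ i, |ξ i|)]
  obtain ⟨B', hBB', hB', hμB⟩ := exists_measurable_superset (lapMeasure n ε Δ) B
  have hTm : Measurable (fun ξ : EuclideanSpace ℝ (Fin n) => ξ + v) :=
    measurable_add_const v
  calc lapMeasure n ε Δ ((fun ξ => ξ + v) ⁻¹' B)
      ≤ lapMeasure n ε Δ ((fun ξ => ξ + v) ⁻¹' B') :=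
        measure_mono (Set.preimage_mono hBB')
    _ ≤ ENNReal.ofReal (Real.exp ε) * lapMeasure n ε Δ B' := ?_
    _ = ENNReal.ofReal (Real.exp ε) * lapMeasure n ε Δ B := by rw [hμB]
  rw [lapMeasure, withDensity_apply _ (hB'.preimage hTm), withDensity_apply _ hB']
  calc ∫⁻ x in (fun ξ => ξ + v) ⁻¹' B', g x ∂volume
      ≤ ∫⁻ x in (fun ξ => ξ + v) ⁻¹' B', ENNReal.ofReal (Real.exp ε) * g (x + v) ∂volume :=
        lintegral_mono fun x => hpt x
    _ = ENNReal.ofReal (Real.exp ε) * ∫⁻ x in (fun ξ => ξ + v) ⁻¹' B', g (x + v) ∂volume :=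
        lintegral_const_mul' _ _ ENNReal.ofReal_ne_top
    _ = ENNReal.ofReal (Real.exp ε) * ∫⁻ x in B', g x ∂volume := by
        congr 1
        rw [← lintegral_indicator (hB'.preimage hTm), ← lintegral_indicator hB']
        have hind : ((fun ξ => ξ + v) ⁻¹' B').indicator (fun x => g (x + v)) =
            fun x => B'.indicator g (x + v) := by
          funext x
          by_cases hx : x + v ∈ B' <;>
            simp [Set.indicator_apply, Set.mem_preimage, hx]
        rw [hind]
        exact lintegral_add_right_eq_self (B'.indicator g) v

/-- The minimizer of the penalized objective depends on `(a, ξ)` only through their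
sum: shifting the noise by `a - a'` converts the problem for `a` into that for `a'`. -/
lemma phi_shift (n M : ℕ) (ρ ℓ : ℝ) (hρ : 0 < ρ)
    (h : Fin M → EuclideanSpace ℝ (Fin n) → ℝ)
    (w lam : EuclideanSpace ℝ (Fin n))
    (Φ : EuclideanSpace ℝ (Fin n) → EuclideanSpace ℝ (Fin n) → EuclideanSpace ℝ (Fin n))
    (hΦ : ∀ a ξ : EuclideanSpace ℝ (Fin n),
      IsMinOn (fun z => ⟪a, z⟫ + ρ / 2 * ‖w - z + ρ⁻¹ • (lam - ξ)‖ ^ 2 +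
          ∑ m, Real.log (1 + Real.exp (ℓ * h m z)))
        Set.univ (Φ a ξ) ∧
      ∀ y, IsMinOn (fun z => ⟪a, z⟫ + ρ / 2 * ‖w - z + ρ⁻¹ • (lam - ξ)‖ ^ 2 +
          ∑ m, Real.log (1 + Real.exp (ℓ * h m z)))
        Set.univ y → y = Φ a ξ)
    (a a' ξ : EuclideanSpace ℝ (Fin n)) :
    Φ a ξ = Φ a' (ξ + (a - a')) := by
  set v := a - a' with hv
  set f : EuclideanSpace ℝ (Fin n) → ℝ := fun z =>
    ⟪a, z⟫ + ρ / 2 * ‖w - z + ρ⁻¹ • (lam - ξ)‖ ^ 2 +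
      ∑ m, Real.log (1 + Real.exp (ℓ * h m z)) with hf
  set f' : EuclideanSpace ℝ (Fin n) → ℝ := fun z =>
    ⟪a', z⟫ + ρ / 2 * ‖w - z + ρ⁻¹ • (lam - (ξ + v))‖ ^ 2 +
      ∑ m, Real.log (1 + Real.exp (ℓ * h m z)) with hf'
  have hC : ∀ z, f z = f' z +
      (⟪w, v⟫ + ρ⁻¹ * ⟪lam - ξ, v⟫ - (2 * ρ)⁻¹ * ‖v‖ ^ 2) := by
    intro z
    have hA : w - z + ρ⁻¹ • (lam - (ξ + v)) =
        (w - z + ρ⁻¹ • (lam - ξ)) - ρ⁻¹ • v := by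
      module
    have hnorm : ‖w - z + ρ⁻¹ • (lam - (ξ + v))‖ ^ 2 =
        ‖w - z + ρ⁻¹ • (lam - ξ)‖ ^ 2 -
          2 * (ρ⁻¹ * ⟪w - z + ρ⁻¹ • (lam - ξ), v⟫) + ρ⁻¹ ^ 2 * ‖v‖ ^ 2 := by
      rw [hA, @norm_sub_sq_real, real_inner_smul_right, norm_smul]
      rw [Real.norm_eq_abs, abs_of_pos (inv_pos.2 hρ), mul_pow]
    have hinner : ⟪w - z + ρ⁻¹ • (lam - ξ), v⟫ =
        ⟪w, v⟫ - ⟪z, v⟫ + ρ⁻¹ * ⟪lam - ξ, v⟫ := by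
      rw [inner_add_left, inner_sub_left, real_inner_smul_left]
    have hzv : ⟪z, v⟫ = ⟪v, z⟫ := real_inner_comm v z
    rw [hzv] at hinner
    have haz : ⟪a, z⟫ = ⟪a', z⟫ + ⟪v, z⟫ := by
      rw [hv, inner_sub_left]; ring
    simp only [hf, hf']
    rw [hnorm, hinner, haz]
    field_simp
    ring
  obtain ⟨hmin, _⟩ := hΦ a ξ
  obtain ⟨_, huniq'⟩ := hΦ a' (ξ + v)
  exact huniq' (Φ a ξ) (by
    intro y hy
    have h1 := hmin (Set.mem_univ y)
    simp only [Set.mem_setOf_eq] at h1 ⊢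
    have e1 := hC (Φ a ξ)
    have e2 := hC y
    simp only [hf, hf'] at e1 e2 h1 ⊢
    linarith)

/-- Proposition A.5: the log-penalized unconstrained (trust-region variant, without
proximal term) subproblem with Laplace objective perturbation is `ε̄`-differentially
private with respect to perturbations of the linear coefficient of `ℓ₁`-magnitude at
most `Δ`. -/
theorem penalized_trust_subproblem_DP
    (n M : ℕ) (ε Δ ρ ℓ : ℝ) (hε : 0 < ε) (hΔ : 0 < Δ) (hρ : 0 < ρ) (hℓ : 0 < ℓ)
    (h : Fin M → EuclideanSpace ℝ (Fin n) → ℝ)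
    (hconvex : ∀ m, ConvexOn ℝ Set.univ (h m)) (hsmooth : ∀ m, ContDiff ℝ 2 (h m))
    (w lam : EuclideanSpace ℝ (Fin n))
    (Φ : EuclideanSpace ℝ (Fin n) → EuclideanSpace ℝ (Fin n) → EuclideanSpace ℝ (Fin n))
    (hΦ : ∀ a ξ : EuclideanSpace ℝ (Fin n),
      IsMinOn (fun z => ⟪a, z⟫ + ρ / 2 * ‖w - z + ρ⁻¹ • (lam - ξ)‖ ^ 2 +
          ∑ m, Real.log (1 + Real.exp (ℓ * h m z)))
        Set.univ (Φ a ξ) ∧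
      ∀ y, IsMinOn (fun z => ⟪a, z⟫ + ρ / 2 * ‖w - z + ρ⁻¹ • (lam - ξ)‖ ^ 2 +
          ∑ m, Real.log (1 + Real.exp (ℓ * h m z)))
        Set.univ y → y = Φ a ξ)
    (a a' : EuclideanSpace ℝ (Fin n)) (ha : ∑ i, |a i - a' i| ≤ Δ)
    (S : Set (EuclideanSpace ℝ (Fin n))) (hS : MeasurableSet S) :
    ENNReal.ofReal (Real.exp (-ε)) * lapMeasure n ε Δ (Φ a' ⁻¹' S) ≤
        lapMeasure n ε Δ (Φ a ⁻¹' S) ∧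
      lapMeasure n ε Δ (Φ a ⁻¹' S) ≤
        ENNReal.ofReal (Real.exp ε) * lapMeasure n ε Δ (Φ a' ⁻¹' S) := by
  have hv1 : ∑ i, |(a - a') i| ≤ Δ := by
    simpa using ha
  have hv2 : ∑ i, |(a' - a) i| ≤ Δ := by
    have : ∀ i, |(a' - a) i| = |(a - a') i| := by
      intro i; simp [abs_sub_comm]
    rw [Finset.sum_congr rfl fun i _ => this i]
    exact hv1
  have hset1 : Φ a ⁻¹' S = (fun ξ => ξ + (a - a')) ⁻¹' (Φ a' ⁻¹' S) := by
    ext ξ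
    simp only [Set.mem_preimage]
    rw [phi_shift n M ρ ℓ hρ h w lam Φ hΦ a a' ξ]
  have hset2 : Φ a' ⁻¹' S = (fun ξ => ξ + (a' - a)) ⁻¹' (Φ a ⁻¹' S) := by
    ext ξ
    simp only [Set.mem_preimage]
    rw [phi_shift n M ρ ℓ hρ h w lam Φ hΦ a' a ξ]
  constructor
  · have hb : lapMeasure n ε Δ (Φ a' ⁻¹' S) ≤
        ENNReal.ofReal (Real.exp ε) * lapMeasure n ε Δ (Φ a ⁻¹' S) := by
      rw [hset2]
      exact lap_shift_le n ε Δ hε hΔ _ hv2 _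
    calc ENNReal.ofReal (Real.exp (-ε)) * lapMeasure n ε Δ (Φ a' ⁻¹' S)
        ≤ ENNReal.ofReal (Real.exp (-ε)) *
            (ENNReal.ofReal (Real.exp ε) * lapMeasure n ε Δ (Φ a ⁻¹' S)) :=
          mul_le_mul_right hb _
      _ = lapMeasure n ε Δ (Φ a ⁻¹' S) := by
          rw [← mul_assoc, ← ENNReal.ofReal_mul (Real.exp_nonneg _), ← Real.exp_add,
            neg_add_cancel, Real.exp_zero, ENNReal.ofReal_one, one_mul]
  · rw [hset1]
    exact lap_shift_le n ε Δ hε hΔ _ hv1 _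
end

section
/- Let n ∈ ℕ, let W ⊆ ℝⁿ be a convex set, let f : ℝⁿ → ℝ, let ρ, η > 0, and let zₜ, w⁺, λ, ξ, v ∈ ℝⁿ satisfy f(u) ≥ f(zₜ) + ⟨v, u − zₜ⟩ for all u ∈ W (v is a subgradient of f at zₜ over W). Suppose z⁺ ∈ W minimizes over W the function z ↦ ⟨v, z⟩ + (ρ/2)‖w⁺ − z + (λ − ξ)/ρ‖² + (1/(2η))‖z − zₜ‖², and define λ⁺ := λ + ρ(w⁺ − z⁺). Then for every z ∈ W: f(zₜ) − f(z) − ⟨λ⁺, z⁺ − z⟩ ≤ (η/2)‖v + ξ‖² + (1/(2η))(‖z − zₜ‖² − ‖z − z⁺‖²) + ⟨ξ, z − zₜ⟩. -/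
open scoped RealInnerProductSpace

private lemma key_aux (G K : ℝ) (hK : 0 ≤ K)
    (h : ∀ t : ℝ, 0 < t → t ≤ 1 → 0 ≤ t * G + t ^ 2 * K) : 0 ≤ G := by
  by_contra hG
  push_neg at hG
  rcases eq_or_lt_of_le hK with hK0 | hKpos
  · have := h 1 one_pos le_rfl
    nlinarith
  · set t := min 1 (-G / (2 * K)) with ht
    have ht0 : 0 < t := lt_min one_pos (div_pos (neg_pos.mpr hG) (by positivity))
    have ht1 : t ≤ 1 := min_le_left _ _
    have htK : t ≤ -G / (2 * K) := min_le_right _ _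
    have h0 := h t ht0 ht1
    rw [le_div_iff₀ (by positivity)] at htK
    nlinarith [mul_le_mul_of_nonneg_left htK ht0.le]

private lemma expand_sq {E : Type*} [NormedAddCommGroup E] [InnerProductSpace ℝ E]
    (x d : E) (t : ℝ) :
    ‖x + t • d‖ ^ 2 = ‖x‖ ^ 2 + 2 * t * ⟪x, d⟫ + t ^ 2 * ‖d‖ ^ 2 := by
  rw [norm_add_sq_real, real_inner_smul_right, norm_smul, mul_pow, Real.norm_eq_abs, sq_abs]
  ring

/-- Proposition 3.6: the per-iteration basic inequality for the differentially private
inexact ADMM proximal subproblem. -/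
theorem DP_IADMM_basic_inequality
    (n : ℕ) (W : Set (EuclideanSpace ℝ (Fin n))) (hW : Convex ℝ W)
    (f : EuclideanSpace ℝ (Fin n) → ℝ) (ρ η : ℝ) (hρ : 0 < ρ) (hη : 0 < η)
    (zt wp lam ξ v : EuclideanSpace ℝ (Fin n))
    (hsub : ∀ u ∈ W, f zt + ⟪v, u - zt⟫ ≤ f u)
    (zp : EuclideanSpace ℝ (Fin n)) (hzpW : zp ∈ W)
    (hzpmin : IsMinOn
      (fun z => ⟪v, z⟫ + ρ / 2 * ‖wp - z + ρ⁻¹ • (lam - ξ)‖ ^ 2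
        + 1 / (2 * η) * ‖z - zt‖ ^ 2) W zp)
    (lamp : EuclideanSpace ℝ (Fin n)) (hlamp : lamp = lam + ρ • (wp - zp)) :
    ∀ z ∈ W, f zt - f z - ⟪lamp, zp - z⟫ ≤
      η / 2 * ‖v + ξ‖ ^ 2 + 1 / (2 * η) * (‖z - zt‖ ^ 2 - ‖z - zp‖ ^ 2)
        + ⟪ξ, z - zt⟫ := by
  intro z hz
  set μ : ℝ := 1 / (2 * η) with hμdef
  have hμ : 0 < μ := by rw [hμdef]; positivity
  have h2ημ : 2 * η * μ = 1 := by rw [hμdef]; field_simp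
  have hημ : η * μ = 1 / 2 := by rw [hμdef]; field_simp
  have hρσ : ρ * ρ⁻¹ = 1 := mul_inv_cancel₀ hρ.ne'
  set d := z - zp with hd
  set g := v + ξ - lamp + (2 * μ) • (zp - zt) with hg
  -- expansion of the inner product with the "gradient"
  have egd : ⟪g, d⟫ = ⟪v, d⟫ - ρ * ⟪wp - zp + ρ⁻¹ • (lam - ξ), d⟫
      + 2 * μ * ⟪zp - zt, d⟫ := by
    rw [hg, hlamp]
    simp only [inner_add_left, inner_sub_left, real_inner_smul_left, inner_sub_right]
    linear_combination (⟪(lam : EuclideanSpace ℝ (Fin n)), d⟫ - ⟪(ξ : EuclideanSpace ℝ (Fin n)), d⟫) * hρσ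
  -- variational inequality
  have hO : 0 ≤ ⟪g, d⟫ := by
    apply key_aux _ ((ρ / 2 + μ) * ‖d‖ ^ 2) (by positivity)
    intro t ht0 ht1
    have hmem : zp + t • d ∈ W := by
      have h := hW hzpW hz (by linarith : (0:ℝ) ≤ 1 - t) ht0.le (by ring)
      have e : zp + t • d = (1 - t) • zp + t • z := by rw [hd]; module
      rw [e]; exact h
    have h0 := isMinOn_iff.mp hzpmin _ hmem
    have e1 : wp - (zp + t • d) + ρ⁻¹ • (lam - ξ)
        = (wp - zp + ρ⁻¹ • (lam - ξ)) + (-t) • d := by module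
    have e2 : (zp + t • d) - zt = (zp - zt) + t • d := by module
    rw [e1, e2, expand_sq (wp - zp + ρ⁻¹ • (lam - ξ)) d (-t), expand_sq (zp - zt) d t,
      inner_add_right, real_inner_smul_right] at h0
    rw [egd]
    nlinarith [h0]
  -- subgradient inequality
  have h1 : f zt - f z ≤ ⟪v, zt - z⟫ := by
    have h := hsub z hz
    have e : ⟪v, zt - z⟫ = -⟪v, z - zt⟫ := by
      simp only [inner_sub_right]; ring
    linarith [h, e.ge, e.le]
  -- Young's inequality
  have hA : ⟪v + ξ, zt - zp⟫ ≤ η / 2 * ‖v + ξ‖ ^ 2 + μ * ‖zp - zt‖ ^ 2 := by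
    have hsq : (0:ℝ) ≤ ‖η • (v + ξ) - (zt - zp)‖ ^ 2 := by positivity
    rw [norm_sub_sq_real, real_inner_smul_left, norm_smul, mul_pow, Real.norm_eq_abs,
      sq_abs, norm_sub_rev] at hsq
    have hsq' : 2 * η * ⟪v + ξ, zt - zp⟫ ≤ η ^ 2 * ‖v + ξ‖ ^ 2 + ‖zp - zt‖ ^ 2 := by
      linarith
    have hsq'' := mul_le_mul_of_nonneg_left hsq' hμ.le
    have e1 : μ * (2 * η * ⟪v + ξ, zt - zp⟫) = ⟪v + ξ, zt - zp⟫ := by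
      linear_combination ⟪v + ξ, zt - zp⟫ * h2ημ
    have e2 : μ * (η ^ 2 * ‖v + ξ‖ ^ 2 + ‖zp - zt‖ ^ 2)
        = η / 2 * ‖v + ξ‖ ^ 2 + μ * ‖zp - zt‖ ^ 2 := by
      linear_combination (η * ‖v + ξ‖ ^ 2) * hημ
    linarith
  -- three-point identity
  have hC : 2 * ⟪zp - zt, d⟫ = ‖z - zt‖ ^ 2 - ‖z - zp‖ ^ 2 - ‖zp - zt‖ ^ 2 := by
    have h := norm_add_sq_real (z - zp) (zp - zt)
    have e : (z - zp) + (zp - zt) = z - zt := by abel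
    rw [e] at h
    rw [hd, real_inner_comm]
    linarith
  have hC' : 2 * μ * ⟪zp - zt, d⟫
      = μ * (‖z - zt‖ ^ 2 - ‖z - zp‖ ^ 2 - ‖zp - zt‖ ^ 2) := by
    linear_combination μ * hC
  -- algebraic identity
  have h5 : ⟪v, zt - z⟫ + ⟪lamp, z - zp⟫
      = ⟪v + ξ, zt - zp⟫ + ⟪ξ, z - zt⟫ + 2 * μ * ⟪zp - zt, d⟫ - ⟪g, d⟫ := by
    rw [hg, hd]
    simp only [inner_add_left, inner_sub_left, inner_sub_right, real_inner_smul_left]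
    ring
  have e0 : ⟪lamp, zp - z⟫ = -⟪lamp, z - zp⟫ := by
    simp only [inner_sub_right]; ring
  linarith [h1, h5, hO, hA, hC', e0.le, e0.ge]
end

section
/- Let n, P ∈ ℕ and ρ > 0. Let w⁺, w ∈ ℝⁿ and, for each p ∈ [P], let z⁰_p, z¹_p, z_p, λ⁰_p, λ_p ∈ ℝⁿ. Define λ¹_p := λ⁰_p + ρ(w⁺ − z¹_p) and λ̃_p := λ⁰_p + ρ(w⁺ − z⁰_p). Then: Σ_{p=1}^P ( −⟨λ¹_p, z¹_p − z_p⟩ + ⟨λ̃_p, w⁺ − w⟩ ) ≥ Σ_{p=1}^P ( ⟨w⁺ − w, λ_p⟩ − ⟨z⁰_p − z_p, λ_p⟩ − ⟨λ̃_p − λ_p, w − z_p⟩ ) − Σ_{p=1}^P ⟨λ_p, z¹_p − z⁰_p⟩ + (ρ/2)·Σ_{p=1}^P ( ‖z_p − z¹_p‖² − ‖z_p − z⁰_p‖² ) + (1/(2ρ))·Σ_{p=1}^P ( ‖λ_p − λ¹_p‖² − ‖λ_p − λ⁰_p‖² ). -/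
open scoped RealInnerProductSpace

private lemma key_identity (n : ℕ) (ρ : ℝ) (hρ : ρ ≠ 0)
    (wp w z0 z1 z lam0 lam : EuclideanSpace ℝ (Fin n)) :
    (-⟪lam0 + ρ • (wp - z1), z1 - z⟫ + ⟪lam0 + ρ • (wp - z0), wp - w⟫) =
      (⟪wp - w, lam⟫ - ⟪z0 - z, lam⟫ - ⟪(lam0 + ρ • (wp - z0)) - lam, w - z⟫)
        - ⟪lam, z1 - z0⟫
        + ρ / 2 * (‖z - z1‖ ^ 2 - ‖z - z0‖ ^ 2)
        + 1 / (2 * ρ) * (‖lam - (lam0 + ρ • (wp - z1))‖ ^ 2 - ‖lam - lam0‖ ^ 2)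
        + ρ / 2 * ‖wp - z0‖ ^ 2 := by
  simp only [← real_inner_self_eq_norm_sq, inner_sub_left, inner_sub_right,
    inner_add_left, inner_add_right, real_inner_smul_left, real_inner_smul_right,
    real_inner_comm w wp, real_inner_comm z0 wp, real_inner_comm z1 wp,
    real_inner_comm lam0 wp, real_inner_comm lam wp,
    real_inner_comm z0 w, real_inner_comm z1 w, real_inner_comm lam0 w,
    real_inner_comm lam w, real_inner_comm z1 z0, real_inner_comm lam0 z0,
    real_inner_comm lam z0, real_inner_comm lam0 z1, real_inner_comm lam z1,
    real_inner_comm lam lam0, real_inner_comm z wp, real_inner_comm z w,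
    real_inner_comm z z0, real_inner_comm z z1, real_inner_comm lam0 z,
    real_inner_comm lam z]
  field_simp
  ring

/-- Lemma A.2: simplification and lower bound of the per-iteration left-hand side
`LHSᵗ(w, z)` in the convergence analysis of the DP inexact ADMM algorithm. -/
theorem per_iteration_LHS_lower_bound
    (n P : ℕ) (ρ : ℝ) (hρ : 0 < ρ)
    (wp w : EuclideanSpace ℝ (Fin n))
    (z0 z1 z lam0 lam : Fin P → EuclideanSpace ℝ (Fin n))
    (lam1 lamTil : Fin P → EuclideanSpace ℝ (Fin n))
    (hlam1 : ∀ p, lam1 p = lam0 p + ρ • (wp - z1 p))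
    (hlamTil : ∀ p, lamTil p = lam0 p + ρ • (wp - z0 p)) :
    (∑ p, (-⟪lam1 p, z1 p - z p⟫ + ⟪lamTil p, wp - w⟫)) ≥
      (∑ p, (⟪wp - w, lam p⟫ - ⟪z0 p - z p, lam p⟫ - ⟪lamTil p - lam p, w - z p⟫))
        - (∑ p, ⟪lam p, z1 p - z0 p⟫)
        + ρ / 2 * ∑ p, (‖z p - z1 p‖ ^ 2 - ‖z p - z0 p‖ ^ 2)
        + 1 / (2 * ρ) * ∑ p, (‖lam p - lam1 p‖ ^ 2 - ‖lam p - lam0 p‖ ^ 2) := by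
  have h1 : (∑ p, (-⟪lam1 p, z1 p - z p⟫ + ⟪lamTil p, wp - w⟫)) =
      ((∑ p, (⟪wp - w, lam p⟫ - ⟪z0 p - z p, lam p⟫ - ⟪lamTil p - lam p, w - z p⟫))
        - (∑ p, ⟪lam p, z1 p - z0 p⟫)
        + ρ / 2 * ∑ p, (‖z p - z1 p‖ ^ 2 - ‖z p - z0 p‖ ^ 2)
        + 1 / (2 * ρ) * ∑ p, (‖lam p - lam1 p‖ ^ 2 - ‖lam p - lam0 p‖ ^ 2))
        + ρ / 2 * ∑ p, ‖wp - z0 p‖ ^ 2 := by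
    simp only [Finset.mul_sum, ← Finset.sum_sub_distrib, ← Finset.sum_add_distrib]
    refine Finset.sum_congr rfl fun p _ => ?_
    rw [hlam1 p, hlamTil p]
    exact key_identity n ρ hρ.ne' wp w (z0 p) (z1 p) (z p) (lam0 p) (lam p)
  have h2 : 0 ≤ ρ / 2 * ∑ p, ‖wp - z0 p‖ ^ 2 := by
    apply mul_nonneg (by linarith)
    exact Finset.sum_nonneg fun p _ => sq_nonneg _
  linarith [h1]
end

section
/- Let n, P ∈ ℕ, T ∈ ℕ, let W ⊆ ℝⁿ, and for each p ∈ [P] let f_p : ℝⁿ → ℝ be convex. Let ρ_1 ≤ … ≤ ρ_T be positive reals with ρ_T ≤ ρmax, let wᵗ⁺¹ ∈ ℝⁿ (t ∈ [T]), let zᵗ_p ∈ W (t ∈ [T+1], p ∈ [P]), and let λᵗ_p ∈ ℝⁿ satisfy λᵗ⁺¹_p = λᵗ_p + ρ_t(wᵗ⁺¹ − zᵗ⁺¹_p) for t ∈ [T], p ∈ [P]; define λ̃ᵗ_p := λᵗ_p + ρ_t(wᵗ⁺¹ − zᵗ_p). Let U₂ ≥ 0 satisfy Σ_{p=1}^P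 ‖u_p − u'_p‖² ≤ U₂ for all u, u' ∈ W^P. Fix w ∈ ℝⁿ, z ∈ W^P, λ ∈ (ℝⁿ)^P, and define the averages w^(T) := (1/T)Σ_{t=1}^T wᵗ⁺¹, z^(T)_p := (1/T)Σ_{t=1}^T zᵗ_p, λ^(T)_p := (1/T)Σ_{t=1}^T λ̃ᵗ_p, and F(z) := Σ_{p=1}^P f_p(z_p). Then (1/T)·Σ_{t=1}^T Σ_{p=1}^P [ f_p(zᵗ_p) − f_p(z_p) − ⟨λᵗ⁺¹_p, zᵗ⁺¹_p − z_p⟩ + ⟨λ̃ᵗ_p, wᵗ⁺¹ − w⟩ ] ≥ F(z^(T)) − F(z) + Σ_{p=1}^P [ ⟨w^(T) − w, λ_p⟩ − ⟨z^(T)_p − z_p, λ_p⟩ − ⟨λ^(T)_p − λ_p, w − z_p⟩ ] − (1/T)·( Σ_{p=1}^P ⟨λ_p, z^{T+1}_p − z¹_p⟩ + U₂·ρmax/2 + (1/(2ρ_1))·Σ_{p=1}^P ‖λ_p − λ¹_p‖² ). -/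
/-!
With `λᵗ⁺¹ - λᵗ = ρₜ(wᵗ⁺¹ - zᵗ⁺¹)` and `λ̃ᵗ - λᵗ = ρₜ(wᵗ⁺¹ - zᵗ)`, completing squares turns the
multiplier part of each summand, minus its share of the coupling term, into
`ρₜ/2 ‖wᵗ⁺¹ - zᵗ‖² + (‖λᵗ⁺¹ - λ‖² - ‖λᵗ - λ‖²)/(2ρₜ) + ρₜ/2 (‖zᵗ⁺¹ - z‖² - ‖zᵗ - z‖²)`
plus a telescoping inner product. Summing by parts, `ρₜ` nondecreasing makes the `λ`-sum at least
`-‖λ¹ - λ‖²/(2ρ₁)` and the `z`-sum at least `-ρ_T U₂/2`. The coupling term is affine in the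
iterates, so it commutes with averaging, and Jensen's inequality moves `F` inside the average.
-/

open Finset
open scoped RealInnerProductSpace

theorem le_sum_Icc_mul_sub_of_antitoneOn {c b : ℕ → ℝ} {T : ℕ} (hT : 1 ≤ T)
    (hc : AntitoneOn c (Set.Icc 1 T)) (hb : ∀ t, 0 ≤ b t) :
    c T * b (T + 1) - c 1 * b 1 ≤ ∑ t ∈ Icc 1 T, c t * (b (t + 1) - b t) := by
  induction T, hT using Nat.le_induction with
  | base => simp [mul_sub]
  | succ T hT ih =>
    rw [sum_Icc_succ_top (by omega)]
    have hcT : c (T + 1) ≤ c T := hc ⟨hT, by omega⟩ ⟨by omega, le_rfl⟩ (by omega)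
    have := ih (hc.mono (Set.Icc_subset_Icc_right (by omega)))
    nlinarith [mul_le_mul_of_nonneg_right hcT (hb (T + 1))]

theorem le_sum_Icc_mul_sub_of_monotoneOn {r a : ℕ → ℝ} {U : ℝ} {T : ℕ} (hT : 1 ≤ T)
    (hr : MonotoneOn r (Set.Icc 1 T)) (hr₁ : 0 ≤ r 1) (ha : ∀ t ∈ Set.Icc 1 T, a t ≤ U) :
    r T * a (T + 1) - r T * U ≤ ∑ t ∈ Icc 1 T, r t * (a (t + 1) - a t) := by
  induction T, hT using Nat.le_induction with
  | base =>
    simp only [Icc_self, sum_singleton]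
    nlinarith [ha 1 ⟨le_rfl, le_rfl⟩]
  | succ T hT ih =>
    rw [sum_Icc_succ_top (by omega)]
    have hrT : r T ≤ r (T + 1) := hr ⟨hT, by omega⟩ ⟨by omega, le_rfl⟩ (by omega)
    have := ih (hr.mono (Set.Icc_subset_Icc_right (by omega)))
      fun t ht => ha t ⟨ht.1, by grind⟩
    nlinarith [mul_le_mul_of_nonneg_right hrT (sub_nonneg.2 (ha (T + 1) ⟨by omega, le_rfl⟩))]

variable {E ι : Type*} [NormedAddCommGroup E] [InnerProductSpace ℝ E]

theorem inner_inv_card_smul_sum_sub_left {s : Finset ι} (hs : s.Nonempty) (v : ι → E) (c y : E) :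
    ⟪(#s : ℝ)⁻¹ • ∑ i ∈ s, v i - c, y⟫ = (#s : ℝ)⁻¹ * ∑ i ∈ s, ⟪v i - c, y⟫ := by
  have : (#s : ℝ) ≠ 0 := by exact_mod_cast hs.card_ne_zero
  simp only [inner_sub_left, ← sum_inner, sum_sub_distrib, sum_const,
    ← Nat.cast_smul_eq_nsmul ℝ, real_inner_smul_left]
  field_simp

theorem ConvexOn.map_inv_card_smul_sum_le {C : Set E} {f : E → ℝ}
    (hf : ConvexOn ℝ C f) {s : Finset ι} (hs : s.Nonempty) {v : ι → E} (hv : ∀ i ∈ s, v i ∈ C) :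
    f ((#s : ℝ)⁻¹ • ∑ i ∈ s, v i) ≤ (#s : ℝ)⁻¹ * ∑ i ∈ s, f (v i) := by
  have : (#s : ℝ) ≠ 0 := by exact_mod_cast hs.card_ne_zero
  rw [smul_sum, mul_sum]
  refine hf.map_sum_le (fun _ _ => by positivity) ?_ hv
  simp [this]

theorem admm_step_identity {ρ : ℝ} (hρ : ρ ≠ 0) {w' wb z z' zb l l' lt lb : E}
    (hl' : l' = l + ρ • (w' - z')) (hlt : lt = l + ρ • (w' - z)) :
    -⟪l', z' - zb⟫ + ⟪lt, w' - wb⟫ - (⟪w' - wb, lb⟫ - ⟪z - zb, lb⟫ - ⟪lt - lb, wb - zb⟫)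
      = ρ / 2 * ‖w' - z‖ ^ 2 + 1 / (2 * ρ) * (‖l' - lb‖ ^ 2 - ‖l - lb‖ ^ 2)
        + ρ / 2 * (‖z' - zb‖ ^ 2 - ‖z - zb‖ ^ 2) + ⟪lb, z - z'⟫ := by
  subst hl' hlt
  simp only [← real_inner_self_eq_norm_sq, inner_sub_left, inner_sub_right, inner_add_left,
    inner_add_right, real_inner_smul_right, real_inner_comm]
  field_simp
  ring

variable [Fintype ι]

theorem sum_admm_step_identity {ρ : ℝ} (hρ : ρ ≠ 0) (w' wb : E) {z z' zb l l' lt lb : ι → E}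
    (hl' : ∀ p, l' p = l p + ρ • (w' - z' p)) (hlt : ∀ p, lt p = l p + ρ • (w' - z p)) :
    ∑ p, (-⟪l' p, z' p - zb p⟫ + ⟪lt p, w' - wb⟫
        - (⟪w' - wb, lb p⟫ - ⟪z p - zb p, lb p⟫ - ⟪lt p - lb p, wb - zb p⟫))
      = ρ / 2 * ∑ p, ‖w' - z p‖ ^ 2
        + 1 / (2 * ρ) * (∑ p, ‖l' p - lb p‖ ^ 2 - ∑ p, ‖l p - lb p‖ ^ 2)
        + ρ / 2 * (∑ p, ‖z' p - zb p‖ ^ 2 - ∑ p, ‖z p - zb p‖ ^ 2)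
        + ∑ p, ⟪lb p, z p - z' p⟫ := by
  simp only [← sum_sub_distrib, mul_sum, ← sum_add_distrib]
  exact sum_congr rfl fun p _ => admm_step_identity hρ (hl' p) (hlt p)

theorem admm_sum_lower_bound {T : ℕ} (hT : 1 ≤ T) {ρ : ℕ → ℝ} {ρmax U : ℝ}
    (hρpos : ∀ t ∈ Icc 1 T, 0 < ρ t) (hρmono : MonotoneOn ρ (Set.Icc 1 T)) (hρmax : ρ T ≤ ρmax)
    {w : ℕ → E} {z lam lamTil : ℕ → ι → E} {wb : E} {zb lb : ι → E}
    (hlam : ∀ t ∈ Icc 1 T, ∀ p, lam (t + 1) p = lam t p + ρ t • (w (t + 1) - z (t + 1) p))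
    (hlamTil : ∀ t ∈ Icc 1 T, ∀ p, lamTil t p = lam t p + ρ t • (w (t + 1) - z t p))
    (hU : ∀ t ∈ Set.Icc 1 T, ∑ p, ‖z t p - zb p‖ ^ 2 ≤ U) :
    -(∑ p, ⟪lb p, z (T + 1) p - z 1 p⟫ + U * ρmax / 2
        + 1 / (2 * ρ 1) * ∑ p, ‖lb p - lam 1 p‖ ^ 2) ≤
      ∑ t ∈ Icc 1 T, ∑ p, (-⟪lam (t + 1) p, z (t + 1) p - zb p⟫ + ⟪lamTil t p, w (t + 1) - wb⟫
        - (⟪w (t + 1) - wb, lb p⟫ - ⟪z t p - zb p, lb p⟫ - ⟪lamTil t p - lb p, wb - zb p⟫)) := by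
  have h1 : 1 ∈ Icc 1 T := mem_Icc.2 ⟨le_rfl, hT⟩
  have hTmem : T ∈ Icc 1 T := mem_Icc.2 ⟨hT, le_rfl⟩
  rw [sum_congr rfl fun t ht =>
    sum_admm_step_identity (hρpos t ht).ne' _ _ (hlam t ht) (hlamTil t ht)]
  simp only [sum_add_distrib]
  have hdist : 0 ≤ ∑ t ∈ Icc 1 T, ρ t / 2 * ∑ p, ‖w (t + 1) - z t p‖ ^ 2 :=
    sum_nonneg fun t ht => mul_nonneg (half_pos (hρpos t ht)).le (by positivity)
  have hcAnti : AntitoneOn (fun t => 1 / (2 * ρ t)) (Set.Icc 1 T) := fun s hs t ht hst =>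
    one_div_le_one_div_of_le (mul_pos two_pos (hρpos s (mem_Icc.2 hs)))
      (by linarith [hρmono hs ht hst])
  have hlamTel := le_sum_Icc_mul_sub_of_antitoneOn
    (b := fun t => ∑ p, ‖lam t p - lb p‖ ^ 2) hT hcAnti fun t => by positivity
  have hzTel := le_sum_Icc_mul_sub_of_monotoneOn (r := fun t => ρ t / 2)
    (a := fun t => ∑ p, ‖z t p - zb p‖ ^ 2) hT
    (fun s hs t ht hst => by linarith [hρmono hs ht hst]) (half_pos (hρpos 1 h1)).le hU
  have hinnerTel : ∑ t ∈ Icc 1 T, ∑ p, ⟪lb p, z t p - z (t + 1) p⟫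
      = -∑ p, ⟪lb p, z (T + 1) p - z 1 p⟫ := by
    have := sum_Icc_sub hT fun t => ∑ p, ⟪lb p, z t p⟫
    simp only [inner_sub_right, sum_sub_distrib] at this ⊢
    linarith
  have hlamLast : 0 ≤ 1 / (2 * ρ T) * ∑ p, ‖lam (T + 1) p - lb p‖ ^ 2 := by
    have := hρpos T hTmem; positivity
  have hzLast : 0 ≤ ρ T / 2 * ∑ p, ‖z (T + 1) p - zb p‖ ^ 2 := by
    have := hρpos T hTmem; positivity
  have hU₀ : 0 ≤ U := (sum_nonneg fun p _ => sq_nonneg _).trans (hU 1 ⟨le_rfl, hT⟩)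
  have hUmax : ρ T / 2 * U ≤ U * ρmax / 2 := by nlinarith
  simp only [norm_sub_rev (lb _)]
  linarith

/-- Lemma A.3: the lower bound on the averaged left-hand side `(1/T)Σ_t LHSᵗ(w, z)` in
the convergence analysis of the DP inexact ADMM algorithm. -/
theorem averaged_LHS_lower_bound
    (n P T : ℕ) (hT : 1 ≤ T)
    (W : Set (EuclideanSpace ℝ (Fin n)))
    (f : Fin P → EuclideanSpace ℝ (Fin n) → ℝ)
    (hf : ∀ p, ConvexOn ℝ Set.univ (f p))
    (ρ : ℕ → ℝ) (ρmax : ℝ)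
    (hρpos : ∀ t ∈ Finset.Icc 1 T, 0 < ρ t)
    (hρmono : ∀ s ∈ Finset.Icc 1 T, ∀ t ∈ Finset.Icc 1 T, s ≤ t → ρ s ≤ ρ t)
    (hρmax : ρ T ≤ ρmax)
    (w : ℕ → EuclideanSpace ℝ (Fin n))
    (z lam : ℕ → Fin P → EuclideanSpace ℝ (Fin n))
    (hzW : ∀ t ∈ Finset.Icc 1 (T + 1), ∀ p, z t p ∈ W)
    (hlam : ∀ t ∈ Finset.Icc 1 T, ∀ p,
      lam (t + 1) p = lam t p + ρ t • (w (t + 1) - z (t + 1) p))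
    (lamTil : ℕ → Fin P → EuclideanSpace ℝ (Fin n))
    (hlamTil : ∀ t ∈ Finset.Icc 1 T, ∀ p,
      lamTil t p = lam t p + ρ t • (w (t + 1) - z t p))
    (U₂ : ℝ)
    (hU₂ : ∀ u u' : Fin P → EuclideanSpace ℝ (Fin n),
      (∀ p, u p ∈ W) → (∀ p, u' p ∈ W) → (∑ p, ‖u p - u' p‖ ^ 2) ≤ U₂)
    (wbar : EuclideanSpace ℝ (Fin n))
    (zbar lambar : Fin P → EuclideanSpace ℝ (Fin n)) (hzbarW : ∀ p, zbar p ∈ W)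
    (wavg : EuclideanSpace ℝ (Fin n)) (zavg lamavg : Fin P → EuclideanSpace ℝ (Fin n))
    (hwavg : wavg = (T : ℝ)⁻¹ • ∑ t ∈ Finset.Icc 1 T, w (t + 1))
    (hzavg : ∀ p, zavg p = (T : ℝ)⁻¹ • ∑ t ∈ Finset.Icc 1 T, z t p)
    (hlamavg : ∀ p, lamavg p = (T : ℝ)⁻¹ • ∑ t ∈ Finset.Icc 1 T, lamTil t p) :
    (T : ℝ)⁻¹ * ∑ t ∈ Finset.Icc 1 T, ∑ p,
        (f p (z t p) - f p (zbar p) - ⟪lam (t + 1) p, z (t + 1) p - zbar p⟫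
          + ⟪lamTil t p, w (t + 1) - wbar⟫) ≥
      (∑ p, f p (zavg p)) - (∑ p, f p (zbar p))
        + (∑ p, (⟪wavg - wbar, lambar p⟫ - ⟪zavg p - zbar p, lambar p⟫
            - ⟪lamavg p - lambar p, wbar - zbar p⟫))
        - (T : ℝ)⁻¹ * ((∑ p, ⟪lambar p, z (T + 1) p - z 1 p⟫) + U₂ * ρmax / 2
            + 1 / (2 * ρ 1) * ∑ p, ‖lambar p - lam 1 p‖ ^ 2) := by
  have hne : (Icc 1 T).Nonempty := nonempty_Icc.2 hT
  have hcard : (#(Icc 1 T) : ℝ) = T := by simp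
  have hJensen : ∑ p, f p (zavg p) ≤ (T : ℝ)⁻¹ * ∑ t ∈ Icc 1 T, ∑ p, f p (z t p) := by
    rw [sum_comm, mul_sum]
    gcongr with p
    simpa [hcard, ← hzavg p] using
      (hf p).map_inv_card_smul_sum_le hne fun t _ => Set.mem_univ (z t p)
  have hlinear : ∑ p, (⟪wavg - wbar, lambar p⟫ - ⟪zavg p - zbar p, lambar p⟫
        - ⟪lamavg p - lambar p, wbar - zbar p⟫)
      = (T : ℝ)⁻¹ * ∑ t ∈ Icc 1 T, ∑ p, (⟪w (t + 1) - wbar, lambar p⟫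
        - ⟪z t p - zbar p, lambar p⟫ - ⟪lamTil t p - lambar p, wbar - zbar p⟫) := by
    simp only [hwavg, hzavg, hlamavg, ← hcard, inner_inv_card_smul_sum_sub_left hne,
      sum_comm (s := Icc 1 T), mul_sum, sum_sub_distrib, mul_sub]
  have hcore := admm_sum_lower_bound hT hρpos
    (fun s hs t ht hst => hρmono s (by simpa using hs) t (by simpa using ht) hst) hρmax
    (wb := wbar) (lb := lambar) hlam hlamTil
    fun t ht => hU₂ _ zbar (hzW t (mem_Icc.2 ⟨ht.1, by grind⟩)) hzbarW
  rw [hlinear, ge_iff_le]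
  have := mul_le_mul_of_nonneg_left hcore (by positivity : (0 : ℝ) ≤ (T : ℝ)⁻¹)
  simp only [sum_sub_distrib, sum_add_distrib, sum_neg_distrib, sum_const, nsmul_eq_mul, hcard,
    mul_sub, mul_add, mul_neg, ← mul_assoc, inv_mul_cancel₀ (show (T : ℝ) ≠ 0 by positivity),
    one_mul] at this ⊢
  linarith
end

section
/- Let n, P, T ∈ ℕ, let W ⊆ ℝⁿ be a nonempty convex set, and for each p ∈ [P] let f_p : ℝⁿ → ℝ be convex. Let ρ_1 ≤ … ≤ ρ_T be positive reals with ρ_T ≤ ρmax, set η_t := 1/√t, and let U₂ ≥ 0 satisfy both Σ_{p=1}^P ‖u_p − u'_p‖² ≤ U₂ and (Σ_{p=1}^P ‖u_p − u'_p‖²)^{1/2} ≤ U₂ for all u, u' ∈ W^P. Let z¹_p ∈ W, λ¹_p ∈ ℝⁿ, and for each t ∈ [T] suppose: (i) wᵗ⁺¹ minimizes w ↦ Σ_{p=1}^P (⟨λᵗ_p, w⟩ + (ρ_t/2)‖w − zᵗ_p‖²) over ℝⁿ; (ii) vᵗ_p ∈ ℝⁿ satisfies f_p(u) ≥ f_p(zᵗ_p)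 + ⟨vᵗ_p, u − zᵗ_p⟩ for all u ∈ W; (iii) given noise vectors ξᵗ_p ∈ ℝⁿ, zᵗ⁺¹_p minimizes z ↦ ⟨vᵗ_p, z⟩ + (ρ_t/2)‖wᵗ⁺¹ − z + (λᵗ_p − ξᵗ_p)/ρ_t‖² + (1/(2η_t))‖z − zᵗ_p‖² over W; (iv) λᵗ⁺¹_p := λᵗ_p + ρ_t(wᵗ⁺¹ − zᵗ⁺¹_p). Let γ ≥ 0, let w* ∈ W, set z*_p := w* for all p, F(z) := Σ_p f_p(z_p), w^(T) := (1/T)Σ_t wᵗ⁺¹, z^(T)_p := (1/T)Σ_t zᵗ_p. Then: F(z^(T)) − F(z*) + γ·(Σ_{p=1}^P ‖w^(T) − z^(T)_p‖²)^{1/2} ≤ (1/T)·( Σ_{t=1}^T [ (η_t/2)·Σ_p ‖vᵗ_p + ξᵗ_p‖² + (1/(2η_t))·(Σ_p ‖z*_p − zᵗ_p‖² − Σ_p ‖z*_p − zᵗ⁺¹_p‖²) + Σ_p ⟨ξᵗ_p, z*_p − zᵗ_p⟩ ] + γ·U₂ + U₂·ρmax/2 + (γ + (Σ_p‖λ¹_p‖²)^{1/2})²/(2ρ_1)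 ). -/
/-!
Fix a dual vector `Λ = (Λ_p)` of norm at most `γ`. In one iteration the subgradient inequality
at `zᵗ`, the variational inequality of the proximal `z`-update and Young's inequality bound the
primal gap, while the `λ`-update and the first-order condition of the `w`-update (which makes
`∑_p (λᵗ_p + ρ_t (wᵗ⁺¹ - zᵗ_p))` vanish) turn the coupling term `⟨Λ, wᵗ⁺¹ - zᵗ⟩` into
differences of `‖Λ - λᵗ‖²` and `‖zᵗ - z*‖²`. Summed over `t`, these differences telescope against
the monotone penalties `ρ_t` (Abel summation), the remaining linear term telescopes to
`⟨Λ, zᵀ⁺¹ - z¹⟩`, and Jensen's inequality passes to the averaged iterates. Maximising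
`⟨Λ, w^(T) - z^(T)⟩` over the ball of radius `γ` produces the term `γ ‖w^(T) - z^(T)‖`.
-/

open scoped RealInnerProductSpace
open Filter Topology

section InnerProductSpace

variable {H : Type*} [NormedAddCommGroup H] [InnerProductSpace ℝ H]

theorem two_mul_inner_sub_sub_eq_norm_sq_sub (a b c : H) :
    2 * ⟪a - b, b - c⟫ = ‖a - c‖ ^ 2 - ‖a - b‖ ^ 2 - ‖b - c‖ ^ 2 := by
  rw [show a - c = (a - b) + (b - c) by abel, norm_add_sq_real]
  ring

theorem real_inner_le_mul_norm_sq_add_inv_mul_norm_sq (a b : H) {η : ℝ} (hη : 0 < η) :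
    ⟪a, b⟫ ≤ η / 2 * ‖a‖ ^ 2 + 1 / (2 * η) * ‖b‖ ^ 2 := by
  calc ⟪a, b⟫ = η / 2 * ‖a‖ ^ 2 + 1 / (2 * η) * ‖b‖ ^ 2 - ‖η • a - b‖ ^ 2 / (2 * η) := by
        rw [norm_sub_sq_real, norm_smul, real_inner_smul_left, Real.norm_of_nonneg hη.le]
        field_simp
        ring
    _ ≤ η / 2 * ‖a‖ ^ 2 + 1 / (2 * η) * ‖b‖ ^ 2 := sub_le_self _ (by positivity)

theorem add_mul_norm_le_of_forall_inner_le {a b γ : ℝ} (hγ : 0 ≤ γ) (x : H)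
    (h : ∀ y : H, ‖y‖ ≤ γ → a + ⟪y, x⟫ ≤ b) : a + γ * ‖x‖ ≤ b := by
  rcases eq_or_ne x 0 with rfl | hx
  · simpa using h 0 (by simpa using hγ)
  have hx' : 0 < ‖x‖ := norm_pos_iff.mpr hx
  have hy : ‖(γ / ‖x‖) • x‖ = γ := by
    rw [norm_smul, Real.norm_of_nonneg (by positivity), div_mul_cancel₀ _ hx'.ne']
  convert h _ hy.le using 2
  rw [real_inner_smul_left, real_inner_self_eq_norm_sq]
  field_simp

theorem nonneg_of_forall_mul_add_sq_mul_nonneg {a b : ℝ}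
    (h : ∀ s : ℝ, 0 < s → s ≤ 1 → 0 ≤ s * a + s ^ 2 * b) : 0 ≤ a := by
  have hlim : Tendsto (fun s => a + s * b) (𝓝[>] 0) (𝓝 a) := by
    have : Continuous fun s : ℝ => a + s * b := by fun_prop
    simpa using (this.tendsto 0).mono_left nhdsWithin_le_nhds
  refine ge_of_tendsto hlim ?_
  filter_upwards [Ioc_mem_nhdsGT (zero_lt_one : (0 : ℝ) < 1)] with s ⟨hs0, hs1⟩
  have := h s hs0 hs1
  nlinarith

theorem IsMinOn.inner_nonneg_of_quadratic {φ : H → ℝ} {W : Set H} {m g : H} {c : ℝ}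
    (hmin : IsMinOn φ W m) (hW : Convex ℝ W) (hm : m ∈ W)
    (hφ : ∀ x, φ (m + x) = φ m + ⟪g, x⟫ + c * ‖x‖ ^ 2) {u : H} (hu : u ∈ W) :
    0 ≤ ⟪g, u - m⟫ := by
  refine nonneg_of_forall_mul_add_sq_mul_nonneg (b := c * ‖u - m‖ ^ 2) fun s hs0 hs1 => ?_
  have hmem : m + s • (u - m) ∈ W := by
    convert hW hm hu (sub_nonneg.mpr hs1) hs0.le (sub_add_cancel 1 s) using 1
    module
  have : φ m ≤ φ (m + s • (u - m)) := hmin hmem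
  rw [hφ, real_inner_smul_right, norm_smul, Real.norm_of_nonneg hs0.le] at this
  linarith

theorem IsMinOn.eq_zero_of_quadratic {φ : H → ℝ} {m g : H} {c : ℝ}
    (hmin : IsMinOn φ Set.univ m) (hφ : ∀ x, φ (m + x) = φ m + ⟪g, x⟫ + c * ‖x‖ ^ 2) :
    g = 0 := by
  have := hmin.inner_nonneg_of_quadratic convex_univ trivial hφ (Set.mem_univ (m - g))
  rw [sub_sub_cancel_left, inner_neg_right, real_inner_self_eq_norm_sq] at this
  exact norm_eq_zero.mp (by nlinarith [norm_nonneg g])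

end InnerProductSpace

section BasicInequality

variable {H : Type*} [NormedAddCommGroup H] [InnerProductSpace ℝ H]

theorem primal_step_le {F₀ Fₛ η : ℝ} {V Ξ Λ₁ Z₀ Z₁ Zₛ : H} (hη : 0 < η)
    (hsub : F₀ + ⟪V, Zₛ - Z₀⟫ ≤ Fₛ)
    (hvi : 0 ≤ ⟪V - Λ₁ + Ξ + η⁻¹ • (Z₁ - Z₀), Zₛ - Z₁⟫) :
    F₀ - Fₛ ≤ η / 2 * ‖V + Ξ‖ ^ 2 + 1 / (2 * η) * (‖Zₛ - Z₀‖ ^ 2 - ‖Zₛ - Z₁‖ ^ 2)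
      + ⟪Ξ, Zₛ - Z₀⟫ - ⟪Λ₁, Zₛ - Z₁⟫ := by
  have young := real_inner_le_mul_norm_sq_add_inv_mul_norm_sq (V + Ξ) (Z₀ - Z₁) hη
  have prox : η⁻¹ * ⟪Z₁ - Z₀, Zₛ - Z₁⟫
      = 1 / (2 * η) * (‖Zₛ - Z₀‖ ^ 2 - ‖Zₛ - Z₁‖ ^ 2 - ‖Z₀ - Z₁‖ ^ 2) := by
    rw [← norm_neg (Z₀ - Z₁), neg_sub, ← two_mul_inner_sub_sub_eq_norm_sq_sub, real_inner_comm]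
    field_simp
  rw [inner_add_left, inner_add_left, inner_sub_left, real_inner_smul_left, prox] at hvi
  simp only [inner_sub_right, inner_add_left] at hsub hvi young ⊢
  linarith

theorem dual_step_le {ρ : ℝ} {Λ Λ₀ Λ₁ W₁ Z₀ Z₁ Zₛ : H} (hρ : 0 < ρ)
    (hlam : Λ₁ = Λ₀ + ρ • (W₁ - Z₁)) (horth : ⟪Λ₀ + ρ • (W₁ - Z₀), W₁ - Zₛ⟫ = 0) :
    ⟪Λ, W₁ - Z₀⟫ - ⟪Λ₁, Zₛ - Z₁⟫ ≤ 1 / (2 * ρ) * (‖Λ - Λ₀‖ ^ 2 - ‖Λ - Λ₁‖ ^ 2)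
      + ρ / 2 * (‖Z₀ - Zₛ‖ ^ 2 - ‖Z₁ - Zₛ‖ ^ 2) + ⟪Λ, Z₁ - Z₀⟫ := by
  have dual : ⟪Λ - Λ₁, W₁ - Z₁⟫
      = 1 / (2 * ρ) * (‖Λ - Λ₀‖ ^ 2 - ‖Λ - Λ₁‖ ^ 2) - ρ / 2 * ‖W₁ - Z₁‖ ^ 2 := by
    have h := two_mul_inner_sub_sub_eq_norm_sq_sub Λ Λ₁ Λ₀
    rw [hlam, add_sub_cancel_left, real_inner_smul_right, norm_smul,
      Real.norm_of_nonneg hρ.le, ← hlam] at h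
    field_simp
    linear_combination h
  -- `Λ₁ = (Λ₀ + ρ (W₁ - Z₀)) + ρ (Z₀ - Z₁)` and the first summand is orthogonal to `W₁ - Zₛ`
  have cross : ⟪Λ₁, W₁ - Zₛ⟫ = ρ / 2 * (‖Z₀ - Zₛ‖ ^ 2 - ‖Z₁ - Zₛ‖ ^ 2
      + ‖Z₁ - W₁‖ ^ 2 - ‖Z₀ - W₁‖ ^ 2) := by
    have h₀ := two_mul_inner_sub_sub_eq_norm_sq_sub Z₀ W₁ Zₛ
    have h₁ := two_mul_inner_sub_sub_eq_norm_sq_sub Z₁ W₁ Zₛ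
    have : Λ₁ = (Λ₀ + ρ • (W₁ - Z₀)) + ρ • ((Z₀ - W₁) - (Z₁ - W₁)) := by rw [hlam]; module
    rw [this, inner_add_left, horth, real_inner_smul_left, inner_sub_left]
    linear_combination (ρ / 2) * (h₀ - h₁)
  have split : ⟪Λ, W₁ - Z₀⟫ - ⟪Λ₁, Zₛ - Z₁⟫
      = ⟪Λ - Λ₁, W₁ - Z₁⟫ + ⟪Λ, Z₁ - Z₀⟫ + ⟪Λ₁, W₁ - Zₛ⟫ := by
    simp only [inner_sub_left, inner_sub_right]
    ring
  rw [split, dual, cross, norm_sub_rev Z₁ W₁]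
  nlinarith [mul_nonneg hρ.le (sq_nonneg ‖Z₀ - W₁‖)]

end BasicInequality

section Updates

variable {E : Type*} [NormedAddCommGroup E] [InnerProductSpace ℝ E]
  {ι : Type*} [Fintype ι]

theorem IsMinOn.sum_add_smul_sub_eq_zero {ρ : ℝ} {lam z : ι → E} {w : E}
    (hmin : IsMinOn (fun x => ∑ p, (⟪lam p, x⟫ + ρ / 2 * ‖x - z p‖ ^ 2)) Set.univ w) :
    ∑ p, (lam p + ρ • (w - z p)) = 0 := by
  refine hmin.eq_zero_of_quadratic (c := Fintype.card ι * (ρ / 2)) fun x => ?_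
  have hp : ∀ p, ⟪lam p, w + x⟫ + ρ / 2 * ‖w + x - z p‖ ^ 2
      = (⟪lam p, w⟫ + ρ / 2 * ‖w - z p‖ ^ 2) + ⟪lam p + ρ • (w - z p), x⟫ + ρ / 2 * ‖x‖ ^ 2 := by
    intro p
    rw [add_sub_right_comm, norm_add_sq_real, inner_add_right, inner_add_left,
      real_inner_smul_left]
    ring
  simp only [hp, Finset.sum_add_distrib, Finset.sum_const, Finset.card_univ, nsmul_eq_mul,
    inner_add_left, sum_inner]
  ring

theorem IsMinOn.inner_nonneg_of_prox {W : Set E} {ρ η : ℝ} {v w lam ξ z₀ z₁ : E}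
    (hmin : IsMinOn (fun z => ⟪v, z⟫ + ρ / 2 * ‖w - z + ρ⁻¹ • (lam - ξ)‖ ^ 2
      + 1 / (2 * η) * ‖z - z₀‖ ^ 2) W z₁)
    (hW : Convex ℝ W) (hz₁ : z₁ ∈ W) (hρ : ρ ≠ 0) {u : E} (hu : u ∈ W) :
    0 ≤ ⟪v - (lam + ρ • (w - z₁)) + ξ + η⁻¹ • (z₁ - z₀), u - z₁⟫ := by
  have hg : v - (lam + ρ • (w - z₁)) + ξ + η⁻¹ • (z₁ - z₀)
      = v - ρ • (w - z₁ + ρ⁻¹ • (lam - ξ)) + (2 * (1 / (2 * η))) • (z₁ - z₀) := by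
    rw [smul_add, smul_smul, mul_inv_cancel₀ hρ, one_smul,
      show 2 * (1 / (2 * η)) = η⁻¹ by field_simp]
    abel
  rw [hg]
  refine hmin.inner_nonneg_of_quadratic hW hz₁ (c := ρ / 2 + 1 / (2 * η)) (fun x => ?_) hu
  rw [show w - (z₁ + x) + ρ⁻¹ • (lam - ξ) = (w - z₁ + ρ⁻¹ • (lam - ξ)) - x by abel,
    show z₁ + x - z₀ = (z₁ - z₀) + x by abel]
  generalize w - z₁ + ρ⁻¹ • (lam - ξ) = d
  rw [norm_sub_sq_real, norm_add_sq_real]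
  simp only [inner_add_right, inner_add_left, inner_sub_left, real_inner_smul_left]
  ring

end Updates

section FiniteFamilies

variable {E : Type*} [NormedAddCommGroup E] {ι : Type*} [Fintype ι]

theorem sum_inner_le_sqrt_mul_sqrt [InnerProductSpace ℝ E] (a b : ι → E) :
    ∑ p, ⟪a p, b p⟫ ≤ √(∑ p, ‖a p‖ ^ 2) * √(∑ p, ‖b p‖ ^ 2) := by
  simpa only [PiLp.inner_apply, PiLp.norm_eq_of_L2, PiLp.toLp_apply] using
    real_inner_le_norm (WithLp.toLp 2 a) (WithLp.toLp 2 b)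

theorem sqrt_sum_norm_sub_sq_le (a b : ι → E) :
    √(∑ p, ‖a p - b p‖ ^ 2) ≤ √(∑ p, ‖a p‖ ^ 2) + √(∑ p, ‖b p‖ ^ 2) := by
  simpa only [PiLp.norm_eq_of_L2, PiLp.sub_apply, PiLp.toLp_apply] using
    norm_sub_le (WithLp.toLp 2 a) (WithLp.toLp 2 b)

theorem add_mul_sqrt_le_of_forall_sum_inner_le [InnerProductSpace ℝ E] {a b γ : ℝ} (hγ : 0 ≤ γ)
    (x : ι → E)
    (h : ∀ y : ι → E, √(∑ p, ‖y p‖ ^ 2) ≤ γ → a + ∑ p, ⟪y p, x p⟫ ≤ b) :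
    a + γ * √(∑ p, ‖x p‖ ^ 2) ≤ b := by
  simpa only [PiLp.norm_eq_of_L2, PiLp.toLp_apply] using
    add_mul_norm_le_of_forall_inner_le hγ (WithLp.toLp 2 x) fun y hy => by
      simpa only [PiLp.inner_apply, PiLp.toLp_apply] using
        h y (by simpa only [PiLp.norm_eq_of_L2] using hy)

end FiniteFamilies

section Step

variable {E : Type*} [NormedAddCommGroup E] [InnerProductSpace ℝ E]
  {ι : Type*} [Fintype ι]

theorem admm_step_le {f : ι → E → ℝ} {W : Set E} {ρ η : ℝ} {w₁ wₛ : E}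
    {v ξ lam₀ lam₁ z₀ z₁ : ι → E} (hW : Convex ℝ W) (hwₛ : wₛ ∈ W) (hρ : 0 < ρ) (hη : 0 < η)
    (hwmin : IsMinOn (fun x => ∑ p, (⟪lam₀ p, x⟫ + ρ / 2 * ‖x - z₀ p‖ ^ 2)) Set.univ w₁)
    (hsub : ∀ p, f p (z₀ p) + ⟪v p, wₛ - z₀ p⟫ ≤ f p wₛ)
    (hz₁ : ∀ p, z₁ p ∈ W)
    (hzmin : ∀ p, IsMinOn (fun z => ⟪v p, z⟫ + ρ / 2 * ‖w₁ - z + ρ⁻¹ • (lam₀ p - ξ p)‖ ^ 2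
      + 1 / (2 * η) * ‖z - z₀ p‖ ^ 2) W (z₁ p))
    (hlam : ∀ p, lam₁ p = lam₀ p + ρ • (w₁ - z₁ p)) (Λ : ι → E) :
    (∑ p, f p (z₀ p)) - (∑ p, f p wₛ) + ∑ p, ⟪Λ p, w₁ - z₀ p⟫ ≤
      (η / 2 * ∑ p, ‖v p + ξ p‖ ^ 2
        + 1 / (2 * η) * ((∑ p, ‖wₛ - z₀ p‖ ^ 2) - ∑ p, ‖wₛ - z₁ p‖ ^ 2)
        + ∑ p, ⟪ξ p, wₛ - z₀ p⟫)
      + 1 / (2 * ρ) * ((∑ p, ‖Λ p - lam₀ p‖ ^ 2) - ∑ p, ‖Λ p - lam₁ p‖ ^ 2)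
      + ρ / 2 * ((∑ p, ‖z₀ p - wₛ‖ ^ 2) - ∑ p, ‖z₁ p - wₛ‖ ^ 2)
      + ∑ p, ⟪Λ p, z₁ p - z₀ p⟫ := by
  let L : (ι → E) → PiLp 2 (fun _ : ι => E) := WithLp.toLp 2
  have hsub' : (∑ p, f p (z₀ p)) + ⟪L v, L (fun _ => wₛ) - L z₀⟫ ≤ ∑ p, f p wₛ := by
    simpa only [L, PiLp.inner_apply, PiLp.sub_apply, PiLp.toLp_apply, ← Finset.sum_add_distrib]
      using Finset.sum_le_sum fun p _ => hsub p
  have hvi : 0 ≤ ⟪L v - L lam₁ + L ξ + η⁻¹ • (L z₁ - L z₀), L (fun _ => wₛ) - L z₁⟫ := by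
    simp only [L, PiLp.inner_apply, PiLp.add_apply, PiLp.sub_apply, PiLp.smul_apply]
    refine Finset.sum_nonneg fun p _ => ?_
    simpa only [hlam p] using (hzmin p).inner_nonneg_of_prox hW (hz₁ p) hρ.ne' hwₛ
  have hlam' : L lam₁ = L lam₀ + ρ • (L (fun _ => w₁) - L z₁) := by
    ext p
    simp [L, hlam p]
  have horth :
      ⟪L lam₀ + ρ • (L (fun _ => w₁) - L z₀), L (fun _ => w₁) - L (fun _ => wₛ)⟫ = 0 := by
    simp [L, PiLp.inner_apply, ← sum_inner, hwmin.sum_add_smul_sub_eq_zero]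
  have hp := primal_step_le hη hsub' hvi
  have hd := dual_step_le (Λ := L Λ) hρ hlam' horth
  simp only [L, PiLp.inner_apply, PiLp.norm_sq_eq_of_L2, PiLp.add_apply, PiLp.sub_apply] at hp hd
  linarith

end Step

section Telescoping

theorem sum_Icc_mul_sub_le_of_antitoneOn {a D : ℕ → ℝ} {m T : ℕ} (hmT : m ≤ T)
    (ha : AntitoneOn a (Set.Icc m T)) (hD : ∀ t ∈ Set.Ioc m T, 0 ≤ D t) :
    ∑ t ∈ Finset.Icc m T, a t * (D t - D (t + 1)) ≤ a m * D m - a T * D (T + 1) := by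
  induction T, hmT using Nat.le_induction with
  | base => simp only [Finset.Icc_self, Finset.sum_singleton]; linarith
  | succ T hmT ih =>
    rw [Finset.sum_Icc_succ_top (by omega)]
    have hT := ih (ha.mono (Set.Icc_subset_Icc_right (by omega)))
      fun t ht => hD t ⟨ht.1, ht.2.trans T.le_succ⟩
    have haT : a (T + 1) ≤ a T := ha ⟨hmT, by omega⟩ ⟨by omega, le_rfl⟩ (by omega)
    nlinarith [hD (T + 1) ⟨by omega, le_rfl⟩]

theorem sum_Icc_mul_sub_le_of_monotoneOn {a S : ℕ → ℝ} {U : ℝ} {m T : ℕ} (hmT : m ≤ T)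
    (ha : MonotoneOn a (Set.Icc m T)) (ha₀ : 0 ≤ a m) (hS : ∀ t ∈ Set.Icc m T, S t ≤ U) :
    ∑ t ∈ Finset.Icc m T, a t * (S t - S (t + 1)) ≤ a T * (U - S (T + 1)) := by
  induction T, hmT using Nat.le_induction with
  | base =>
    simp only [Finset.Icc_self, Finset.sum_singleton]
    nlinarith [hS m ⟨le_rfl, le_rfl⟩]
  | succ T hmT ih =>
    rw [Finset.sum_Icc_succ_top (by omega)]
    have hT := ih (ha.mono (Set.Icc_subset_Icc_right (by omega)))
      fun t ht => hS t ⟨ht.1, ht.2.trans T.le_succ⟩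
    have haT : a T ≤ a (T + 1) := ha ⟨hmT, by omega⟩ ⟨by omega, le_rfl⟩ (by omega)
    nlinarith [hS (T + 1) ⟨by omega, le_rfl⟩]

end Telescoping

section StepSizes

theorem sum_Icc_one_div_mul_sub_le {ρ D : ℕ → ℝ} {T : ℕ} (hT : 1 ≤ T)
    (hρpos : ∀ t ∈ Set.Icc 1 T, 0 < ρ t) (hρmono : MonotoneOn ρ (Set.Icc 1 T))
    (hD : ∀ t, 0 ≤ D t) :
    ∑ t ∈ Finset.Icc 1 T, 1 / (2 * ρ t) * (D t - D (t + 1)) ≤ D 1 / (2 * ρ 1) := by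
  have hanti : AntitoneOn (fun t => 1 / (2 * ρ t)) (Set.Icc 1 T) := fun s hs t _ hst =>
    one_div_le_one_div_of_le (by linarith [hρpos s hs]) (by linarith [hρmono hs ‹_› hst])
  have hlast : 0 ≤ 1 / (2 * ρ T) * D (T + 1) :=
    mul_nonneg (one_div_nonneg.mpr (by linarith [hρpos T ⟨hT, le_rfl⟩])) (hD _)
  linarith [sum_Icc_mul_sub_le_of_antitoneOn hT hanti fun t _ => hD t,
    show 1 / (2 * ρ 1) * D 1 = D 1 / (2 * ρ 1) by ring]

theorem sum_Icc_div_two_mul_sub_le {ρ S : ℕ → ℝ} {T : ℕ} {U ρmax : ℝ} (hT : 1 ≤ T)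
    (hρpos : ∀ t ∈ Set.Icc 1 T, 0 < ρ t) (hρmono : MonotoneOn ρ (Set.Icc 1 T))
    (hρmax : ρ T ≤ ρmax) (hS₀ : ∀ t, 0 ≤ S t) (hSU : ∀ t ∈ Set.Icc 1 T, S t ≤ U) :
    ∑ t ∈ Finset.Icc 1 T, ρ t / 2 * (S t - S (t + 1)) ≤ U * ρmax / 2 := by
  have hmono : MonotoneOn (fun t => ρ t / 2) (Set.Icc 1 T) := fun s hs t ht hst => by
    linarith [hρmono hs ht hst]
  have h := sum_Icc_mul_sub_le_of_monotoneOn hT hmono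
    (by linarith [hρpos 1 ⟨le_rfl, hT⟩]) hSU
  have hU : 0 ≤ U := (hS₀ 1).trans (hSU 1 ⟨le_rfl, hT⟩)
  nlinarith [hρpos T ⟨hT, le_rfl⟩, hS₀ (T + 1)]

theorem sum_Icc_one_div_mul_sum_norm_sub_sq_le {E ι : Type*} [NormedAddCommGroup E]
    [Fintype ι] {ρ : ℕ → ℝ} {T : ℕ} {γ : ℝ} (hT : 1 ≤ T)
    (hρpos : ∀ t ∈ Set.Icc 1 T, 0 < ρ t) (hρmono : MonotoneOn ρ (Set.Icc 1 T))
    {Λ : ι → E} (hΛ : √(∑ p, ‖Λ p‖ ^ 2) ≤ γ) (lam : ℕ → ι → E) :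
    ∑ t ∈ Finset.Icc 1 T,
        1 / (2 * ρ t) * ((∑ p, ‖Λ p - lam t p‖ ^ 2) - ∑ p, ‖Λ p - lam (t + 1) p‖ ^ 2)
      ≤ (γ + √(∑ p, ‖lam 1 p‖ ^ 2)) ^ 2 / (2 * ρ 1) := by
  have h₁ : ∑ p, ‖Λ p - lam 1 p‖ ^ 2 ≤ (γ + √(∑ p, ‖lam 1 p‖ ^ 2)) ^ 2 :=
    (Real.sqrt_le_iff.mp ((sqrt_sum_norm_sub_sq_le Λ (lam 1)).trans (by linarith))).2
  refine (sum_Icc_one_div_mul_sub_le hT hρpos hρmono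
    (D := fun t => ∑ p, ‖Λ p - lam t p‖ ^ 2) fun t => by positivity).trans ?_
  exact div_le_div_of_nonneg_right h₁ (by linarith [hρpos 1 ⟨le_rfl, hT⟩])

end StepSizes

section Averages

variable {E : Type*} [NormedAddCommGroup E] [InnerProductSpace ℝ E]
  {ι : Type*} [Fintype ι]

theorem sum_Icc_sum_inner_sub_le {m T : ℕ} (hmT : m ≤ T) (Λ : ι → E) (z : ℕ → ι → E) :
    ∑ t ∈ Finset.Icc m T, ∑ p, ⟪Λ p, z (t + 1) p - z t p⟫
      ≤ √(∑ p, ‖Λ p‖ ^ 2) * √(∑ p, ‖z (T + 1) p - z m p‖ ^ 2) := by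
  have telescope p : ∑ t ∈ Finset.Icc m T, ⟪Λ p, z (t + 1) p - z t p⟫
      = ⟪Λ p, z (T + 1) p - z m p⟫ := by
    simp only [inner_sub_right]
    exact Finset.sum_Icc_sub hmT fun t => ⟪Λ p, z t p⟫
  rw [Finset.sum_comm]
  simp only [telescope]
  exact sum_inner_le_sqrt_mul_sqrt Λ _

theorem sum_map_average_add_sum_inner_le {κ : Type*} {K : Set E} {f : ι → E → ℝ}
    (hf : ∀ p, ConvexOn ℝ K (f p)) {s : Finset κ} (hs : s.Nonempty) {w : κ → E}
    {z : κ → ι → E} (hz : ∀ t ∈ s, ∀ p, z t p ∈ K) (Λ : ι → E) (c : ℝ) :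
    (∑ p, f p ((s.card : ℝ)⁻¹ • ∑ t ∈ s, z t p)) - c
        + ∑ p, ⟪Λ p, (s.card : ℝ)⁻¹ • ∑ t ∈ s, w t - (s.card : ℝ)⁻¹ • ∑ t ∈ s, z t p⟫
      ≤ (s.card : ℝ)⁻¹ * ∑ t ∈ s, ((∑ p, f p (z t p)) - c + ∑ p, ⟪Λ p, w t - z t p⟫) := by
  have hcard : (s.card : ℝ) ≠ 0 := by exact_mod_cast hs.card_pos.ne'
  have jensen p : f p ((s.card : ℝ)⁻¹ • ∑ t ∈ s, z t p)
      ≤ (s.card : ℝ)⁻¹ * ∑ t ∈ s, f p (z t p) := by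
    rw [Finset.smul_sum, Finset.mul_sum]
    refine (hf p).map_sum_le (fun _ _ => by positivity) ?_ fun t ht => hz t ht p
    rw [Finset.sum_const, nsmul_eq_mul, mul_inv_cancel₀ hcard]
  have linear : ∑ p, ⟪Λ p, (s.card : ℝ)⁻¹ • ∑ t ∈ s, w t - (s.card : ℝ)⁻¹ • ∑ t ∈ s, z t p⟫
      = (s.card : ℝ)⁻¹ * ∑ t ∈ s, ∑ p, ⟪Λ p, w t - z t p⟫ := by
    simp only [← smul_sub, ← Finset.sum_sub_distrib, real_inner_smul_right, inner_sum,
      ← Finset.mul_sum]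
    rw [Finset.sum_comm]
  have hc : (s.card : ℝ)⁻¹ * ∑ _t ∈ s, c = c := by
    rw [Finset.sum_const, nsmul_eq_mul, inv_mul_cancel_left₀ hcard]
  have hF : ∑ p, f p ((s.card : ℝ)⁻¹ • ∑ t ∈ s, z t p)
      ≤ (s.card : ℝ)⁻¹ * ∑ t ∈ s, ∑ p, f p (z t p) := by
    rw [Finset.sum_comm, Finset.mul_sum]
    exact Finset.sum_le_sum fun p _ => jensen p
  rw [linear, Finset.sum_add_distrib, Finset.sum_sub_distrib, mul_add, mul_sub, hc]
  linarith

end Averages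

theorem DP_IADMM_deterministic_convergence_bound_general
    (n P T : ℕ) (hT : 1 ≤ T)
    (W : Set (EuclideanSpace ℝ (Fin n))) (hWconvex : Convex ℝ W)
    (f : Fin P → EuclideanSpace ℝ (Fin n) → ℝ)
    (hf : ∀ p, ConvexOn ℝ Set.univ (f p))
    (ρ : ℕ → ℝ) (ρmax : ℝ)
    (hρpos : ∀ t ∈ Finset.Icc 1 T, 0 < ρ t)
    (hρmono : ∀ s ∈ Finset.Icc 1 T, ∀ t ∈ Finset.Icc 1 T, s ≤ t → ρ s ≤ ρ t)
    (hρmax : ρ T ≤ ρmax)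
    (η : ℕ → ℝ) (hη : ∀ t, η t = 1 / Real.sqrt t)
    (U₂ : ℝ)
    (hU₂sq : ∀ u u' : Fin P → EuclideanSpace ℝ (Fin n),
      (∀ p, u p ∈ W) → (∀ p, u' p ∈ W) → (∑ p, ‖u p - u' p‖ ^ 2) ≤ U₂)
    (hU₂rt : ∀ u u' : Fin P → EuclideanSpace ℝ (Fin n),
      (∀ p, u p ∈ W) → (∀ p, u' p ∈ W) → Real.sqrt (∑ p, ‖u p - u' p‖ ^ 2) ≤ U₂)
    (w : ℕ → EuclideanSpace ℝ (Fin n))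
    (z lam v ξ : ℕ → Fin P → EuclideanSpace ℝ (Fin n))
    (hz1W : ∀ p, z 1 p ∈ W)
    (hwmin : ∀ t ∈ Finset.Icc 1 T, IsMinOn
      (fun wv => ∑ p, (⟪lam t p, wv⟫ + ρ t / 2 * ‖wv - z t p‖ ^ 2))
      Set.univ (w (t + 1)))
    (hsub : ∀ t ∈ Finset.Icc 1 T, ∀ p, ∀ u ∈ W,
      f p (z t p) + ⟪v t p, u - z t p⟫ ≤ f p u)
    (hzW : ∀ t ∈ Finset.Icc 1 T, ∀ p, z (t + 1) p ∈ W)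
    (hzmin : ∀ t ∈ Finset.Icc 1 T, ∀ p, IsMinOn
      (fun zz => ⟪v t p, zz⟫ + ρ t / 2 * ‖w (t + 1) - zz + (ρ t)⁻¹ • (lam t p - ξ t p)‖ ^ 2
        + 1 / (2 * η t) * ‖zz - z t p‖ ^ 2) W (z (t + 1) p))
    (hlam : ∀ t ∈ Finset.Icc 1 T, ∀ p,
      lam (t + 1) p = lam t p + ρ t • (w (t + 1) - z (t + 1) p))
    (γ : ℝ) (hγ : 0 ≤ γ)
    (wstar : EuclideanSpace ℝ (Fin n)) (hwstar : wstar ∈ W)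
    (zstar : Fin P → EuclideanSpace ℝ (Fin n)) (hzstar : ∀ p, zstar p = wstar)
    (wavg : EuclideanSpace ℝ (Fin n)) (zavg : Fin P → EuclideanSpace ℝ (Fin n))
    (hwavg : wavg = (T : ℝ)⁻¹ • ∑ t ∈ Finset.Icc 1 T, w (t + 1))
    (hzavg : ∀ p, zavg p = (T : ℝ)⁻¹ • ∑ t ∈ Finset.Icc 1 T, z t p) :
    (∑ p, f p (zavg p)) - (∑ p, f p (zstar p))
        + γ * Real.sqrt (∑ p, ‖wavg - zavg p‖ ^ 2) ≤
      (T : ℝ)⁻¹ * ((∑ t ∈ Finset.Icc 1 T,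
          (η t / 2 * ∑ p, ‖v t p + ξ t p‖ ^ 2
            + 1 / (2 * η t) *
              ((∑ p, ‖zstar p - z t p‖ ^ 2) - ∑ p, ‖zstar p - z (t + 1) p‖ ^ 2)
            + ∑ p, ⟪ξ t p, zstar p - z t p⟫))
        + γ * U₂ + U₂ * ρmax / 2
        + (γ + Real.sqrt (∑ p, ‖lam 1 p‖ ^ 2)) ^ 2 / (2 * ρ 1)) := by
  simp only [hzstar, hzavg]
  subst hwavg
  have hρpos' : ∀ t ∈ Set.Icc 1 T, 0 < ρ t := fun t ht => hρpos t (by simpa using ht)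
  have hρmono' : MonotoneOn ρ (Set.Icc 1 T) := by simpa [MonotoneOn] using hρmono
  have hzW' : ∀ t ∈ Set.Icc 1 (T + 1), ∀ p, z t p ∈ W := by
    rintro (_ | _ | t) ⟨ht₁, ht₂⟩ p
    · omega
    · exact hz1W p
    · exact hzW (t + 1) (Finset.mem_Icc.mpr ⟨by omega, by omega⟩) p
  refine add_mul_sqrt_le_of_forall_sum_inner_le hγ _ fun Λ hΛ => ?_
  have hηpos t (ht : t ∈ Finset.Icc 1 T) : 0 < η t := by
    rw [hη, one_div_pos, Real.sqrt_pos, Nat.cast_pos]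
    exact (Finset.mem_Icc.mp ht).1
  have hstep t (ht : t ∈ Finset.Icc 1 T) :=
    admm_step_le hWconvex hwstar (hρpos t ht) (hηpos t ht) (hwmin t ht)
      (fun p => hsub t ht p wstar hwstar) (hzW t ht) (hzmin t ht) (hlam t ht) Λ
  have hdual := sum_Icc_one_div_mul_sum_norm_sub_sq_le hT hρpos' hρmono' hΛ lam
  have hprimal := sum_Icc_div_two_mul_sub_le hT hρpos' hρmono' hρmax
    (S := fun t => ∑ p, ‖z t p - wstar‖ ^ 2) (fun t => by positivity)
    fun t ht => hU₂sq _ _ (hzW' t ⟨ht.1, ht.2.trans T.le_succ⟩) fun _ => hwstar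
  have hlin := (sum_Icc_sum_inner_sub_le hT Λ z).trans
    (mul_le_mul hΛ (hU₂rt _ _ (hzW' (T + 1) ⟨by omega, le_rfl⟩) hz1W) (Real.sqrt_nonneg _) hγ)
  have havg := sum_map_average_add_sum_inner_le hf (Finset.nonempty_Icc.mpr hT)
    (w := fun t => w (t + 1)) (fun t _ p => Set.mem_univ (z t p)) Λ (∑ p, f p wstar)
  rw [Nat.card_Icc, Nat.add_sub_cancel] at havg
  refine havg.trans (mul_le_mul_of_nonneg_left ?_ (by positivity))
  refine (Finset.sum_le_sum hstep).trans ?_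
  simp only [Finset.sum_add_distrib] at hdual hprimal hlin ⊢
  linarith

/-- The deterministic inequality established in the proof of Theorem 3.7 (before taking
expectations over the Laplace noise) for the DP inexact ADMM algorithm with proximal
step sizes `η_t = 1/√t`. -/
theorem DP_IADMM_deterministic_convergence_bound
    (n P T : ℕ) (hT : 1 ≤ T)
    (W : Set (EuclideanSpace ℝ (Fin n))) (hWne : W.Nonempty) (hWconvex : Convex ℝ W)
    (f : Fin P → EuclideanSpace ℝ (Fin n) → ℝ)
    (hf : ∀ p, ConvexOn ℝ Set.univ (f p))
    (ρ : ℕ → ℝ) (ρmax : ℝ)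
    (hρpos : ∀ t ∈ Finset.Icc 1 T, 0 < ρ t)
    (hρmono : ∀ s ∈ Finset.Icc 1 T, ∀ t ∈ Finset.Icc 1 T, s ≤ t → ρ s ≤ ρ t)
    (hρmax : ρ T ≤ ρmax)
    (η : ℕ → ℝ) (hη : ∀ t, η t = 1 / Real.sqrt t)
    (U₂ : ℝ)
    (hU₂sq : ∀ u u' : Fin P → EuclideanSpace ℝ (Fin n),
      (∀ p, u p ∈ W) → (∀ p, u' p ∈ W) → (∑ p, ‖u p - u' p‖ ^ 2) ≤ U₂)
    (hU₂rt : ∀ u u' : Fin P → EuclideanSpace ℝ (Fin n),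
      (∀ p, u p ∈ W) → (∀ p, u' p ∈ W) → Real.sqrt (∑ p, ‖u p - u' p‖ ^ 2) ≤ U₂)
    (w : ℕ → EuclideanSpace ℝ (Fin n))
    (z lam v ξ : ℕ → Fin P → EuclideanSpace ℝ (Fin n))
    (hz1W : ∀ p, z 1 p ∈ W)
    (hwmin : ∀ t ∈ Finset.Icc 1 T, IsMinOn
      (fun wv => ∑ p, (⟪lam t p, wv⟫ + ρ t / 2 * ‖wv - z t p‖ ^ 2))
      Set.univ (w (t + 1)))
    (hsub : ∀ t ∈ Finset.Icc 1 T, ∀ p, ∀ u ∈ W,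
      f p (z t p) + ⟪v t p, u - z t p⟫ ≤ f p u)
    (hzW : ∀ t ∈ Finset.Icc 1 T, ∀ p, z (t + 1) p ∈ W)
    (hzmin : ∀ t ∈ Finset.Icc 1 T, ∀ p, IsMinOn
      (fun zz => ⟪v t p, zz⟫ + ρ t / 2 * ‖w (t + 1) - zz + (ρ t)⁻¹ • (lam t p - ξ t p)‖ ^ 2
        + 1 / (2 * η t) * ‖zz - z t p‖ ^ 2) W (z (t + 1) p))
    (hlam : ∀ t ∈ Finset.Icc 1 T, ∀ p,
      lam (t + 1) p = lam t p + ρ t • (w (t + 1) - z (t + 1) p))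
    (γ : ℝ) (hγ : 0 ≤ γ)
    (wstar : EuclideanSpace ℝ (Fin n)) (hwstar : wstar ∈ W)
    (zstar : Fin P → EuclideanSpace ℝ (Fin n)) (hzstar : ∀ p, zstar p = wstar)
    (wavg : EuclideanSpace ℝ (Fin n)) (zavg : Fin P → EuclideanSpace ℝ (Fin n))
    (hwavg : wavg = (T : ℝ)⁻¹ • ∑ t ∈ Finset.Icc 1 T, w (t + 1))
    (hzavg : ∀ p, zavg p = (T : ℝ)⁻¹ • ∑ t ∈ Finset.Icc 1 T, z t p) :
    (∑ p, f p (zavg p)) - (∑ p, f p (zstar p))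
        + γ * Real.sqrt (∑ p, ‖wavg - zavg p‖ ^ 2) ≤
      (T : ℝ)⁻¹ * ((∑ t ∈ Finset.Icc 1 T,
          (η t / 2 * ∑ p, ‖v t p + ξ t p‖ ^ 2
            + 1 / (2 * η t) *
              ((∑ p, ‖zstar p - z t p‖ ^ 2) - ∑ p, ‖zstar p - z (t + 1) p‖ ^ 2)
            + ∑ p, ⟪ξ t p, zstar p - z t p⟫))
        + γ * U₂ + U₂ * ρmax / 2
        + (γ + Real.sqrt (∑ p, ‖lam 1 p‖ ^ 2)) ^ 2 / (2 * ρ 1)) :=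
  DP_IADMM_deterministic_convergence_bound_general n P T hT W hWconvex f hf ρ ρmax hρpos hρmono
    hρmax η hη U₂ hU₂sq hU₂rt w z lam v ξ hz1W hwmin hsub hzW hzmin hlam γ hγ wstar hwstar zstar
    hzstar wavg zavg hwavg hzavg
end
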